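/- arXiv:hep-th/9407191 — 4 statements merged into one kernel-verified Lean document; each statement's English description precedes it below -/
import Mathlib

section
/- For every nonnegative integer n, the alternating sum over all integers r of (-1)^r q^{r(3r+1)/2} times the Gaussian binomial coefficient [n choose ⌊(n-3r)/2⌋]_q equals 1 (as polynomials in q). -/
/-!
Induction on `n`, the sum being unchanged from `n` to `n + 1` by telescoping. Let `s_n(r)` be the
`r`-th summand and `m = ⌊(n + 1 - 3r)/2⌋`. According to the parity of `n + 1 - 3r`, one of the two
q-Pascal rules `[n+1, m] = q^m [n, m] + [n, m-1] = [n, m] + q^(n+1-m) [n, m-1]` gives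
`s_{n+1}(r) = s_n(r) + F_n(r) - F_n(r + 1)`, where `F_n(r) = (-1)^r q^(r(3r+1)/2 + m) [n, m]` when
`n + 1 - 3r = 2m` and `F_n(r) = 0` otherwise; in the odd case the two exponents agree because
consecutive pentagonal numbers differ by `3r + 2`. As `F_n` has finite support, the sum of the
differences vanishes. At `n = 0` only `r = 0` contributes.
-/

open PowerSeries Finset

/-- `∏_{j=1}^m (1 - q^{a j})`, the q-Pochhammer `(q^a; q^a)_m` as a power series in `q = X`. -/
noncomputable def qpochA (a m : ℕ) : PowerSeries ℚ :=
  ∏ j ∈ Finset.range m, (1 - (PowerSeries.X : PowerSeries ℚ) ^ (a * (j + 1)))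

/-- `(q)_m = ∏_{j=1}^m (1 - q^j)`. -/
noncomputable def qpoch (m : ℕ) : PowerSeries ℚ := qpochA 1 m

/-- Gaussian binomial `[N choose M]_{q^a}`: `(q^a)_N / ((q^a)_M (q^a)_{N-M})` when
`0 ≤ M ≤ N`, and `0` otherwise. -/
noncomputable def qbinomA (a : ℕ) (N M : ℤ) : PowerSeries ℚ :=
  if 0 ≤ M ∧ M ≤ N then
    qpochA a N.toNat * (qpochA a M.toNat)⁻¹ * (qpochA a (N - M).toNat)⁻¹
  else 0

/-- Gaussian binomial `[N choose M]_q`. -/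
noncomputable def qbinom (N M : ℤ) : PowerSeries ℚ := qbinomA 1 N M

section QPochhammer

variable {a : ℕ}

lemma qpochA_succ (m : ℕ) : qpochA a (m + 1) = qpochA a m * (1 - X ^ (a * (m + 1))) :=
  Finset.prod_range_succ _ _

lemma constantCoeff_qpochA (ha : 0 < a) (m : ℕ) : constantCoeff (qpochA a m) = 1 := by
  simp [qpochA, map_prod, ha.ne']

lemma qpochA_mul_inv_cancel (ha : 0 < a) (m : ℕ) : qpochA a m * (qpochA a m)⁻¹ = 1 :=
  PowerSeries.mul_inv_cancel _ (by simp [constantCoeff_qpochA ha])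

lemma qpochA_inv_eq (ha : 0 < a) (m : ℕ) :
    (qpochA a m)⁻¹ = (1 - X ^ (a * (m + 1))) * (qpochA a (m + 1))⁻¹ := by
  have hm : qpochA a m ≠ 0 := fun h => by simpa [h] using constantCoeff_qpochA ha m
  apply mul_left_cancel₀ hm
  rw [qpochA_mul_inv_cancel ha, ← mul_assoc, ← qpochA_succ, qpochA_mul_inv_cancel ha]

/-- `(q^a)_{i+j+2} / ((q^a)_{i+1} (q^a)_{j+1})` splits along the last factor
`1 - q^{a(i+j+2)} = (1 - q^{a(j+1)}) + q^{a(j+1)} (1 - q^{a(i+1)})`. -/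
lemma qpochA_pascal (ha : 0 < a) (i j : ℕ) :
    qpochA a (i + 1 + (j + 1)) * (qpochA a (i + 1))⁻¹ * (qpochA a (j + 1))⁻¹ =
      qpochA a (i + 1 + j) * (qpochA a (i + 1))⁻¹ * (qpochA a j)⁻¹ +
        X ^ (a * (j + 1)) * (qpochA a (i + (j + 1)) * (qpochA a i)⁻¹ * (qpochA a (j + 1))⁻¹) := by
  have hsplit : (X : PowerSeries ℚ) ^ (a * (i + j + 1 + 1)) =
      X ^ (a * (j + 1)) * X ^ (a * (i + 1)) := by
    rw [← pow_add]; ring_nf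
  rw [show i + 1 + (j + 1) = i + j + 1 + 1 by ring, show i + 1 + j = i + j + 1 by ring,
    show i + (j + 1) = i + j + 1 by ring, qpochA_succ, qpochA_inv_eq ha j, qpochA_inv_eq ha i,
    hsplit]
  ring

end QPochhammer

section QBinomial

variable {a : ℕ}

lemma qbinomA_eq_zero {N M : ℤ} (h : M < 0 ∨ N < M) : qbinomA a N M = 0 :=
  if_neg (by omega)

lemma nonneg_and_le_of_qbinomA_ne_zero {N M : ℤ} (h : qbinomA a N M ≠ 0) : 0 ≤ M ∧ M ≤ N := by
  have := mt qbinomA_eq_zero h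
  omega

lemma qbinomA_eq_of_eq_add {N M : ℤ} {i j : ℕ} (hM : M = i) (hN : N = i + j) :
    qbinomA a N M = qpochA a (i + j) * (qpochA a i)⁻¹ * (qpochA a j)⁻¹ := by
  rw [qbinomA, if_pos (by omega)]
  congr <;> omega

lemma qbinomA_self (ha : 0 < a) {N : ℤ} (hN : 0 ≤ N) : qbinomA a N N = 1 := by
  rw [qbinomA_eq_of_eq_add (i := N.toNat) (j := 0) (by omega) (by omega), add_zero,
    qpochA_mul_inv_cancel ha]
  simp [qpochA]

lemma qbinomA_sub_right (N M : ℤ) : qbinomA a N (N - M) = qbinomA a N M := by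
  unfold qbinomA
  rw [sub_sub_cancel]
  split_ifs <;> first | omega | ring

lemma qbinomA_zero_right (ha : 0 < a) {N : ℤ} (hN : 0 ≤ N) : qbinomA a N 0 = 1 := by
  rw [← qbinomA_sub_right, sub_zero, qbinomA_self ha hN]

lemma qbinomA_succ_left (ha : 0 < a) (n : ℕ) (m : ℤ) :
    qbinomA a ((n : ℤ) + 1) m =
      qbinomA a n m + X ^ (a * ((n : ℤ) + 1 - m).toNat) * qbinomA a n (m - 1) := by
  rcases lt_trichotomy m 0 with hm | rfl | hm
  · simp [qbinomA_eq_zero (a := a) (.inl hm),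
      qbinomA_eq_zero (a := a) (.inl (by omega : m - 1 < 0))]
  · simp [qbinomA_zero_right ha (by omega : (0 : ℤ) ≤ n + 1),
      qbinomA_zero_right ha (Int.natCast_nonneg n),
      qbinomA_eq_zero (a := a) (N := n) (M := -1) (.inl (by norm_num))]
  rcases lt_trichotomy m ((n : ℤ) + 1) with hmn | rfl | hmn
  · obtain ⟨i, rfl⟩ : ∃ i : ℕ, m = i + 1 := ⟨(m - 1).toNat, by omega⟩
    obtain ⟨j, rfl⟩ : ∃ j : ℕ, n = i + 1 + j := ⟨n - (i + 1), by omega⟩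
    rw [qbinomA_eq_of_eq_add (i := i + 1) (j := j + 1) (by omega) (by omega),
      qbinomA_eq_of_eq_add (i := i + 1) (j := j) (by omega) (by omega),
      qbinomA_eq_of_eq_add (i := i) (j := j + 1) (by omega) (by omega),
      show ((↑(i + 1 + j) : ℤ) + 1 - (↑i + 1)).toNat = j + 1 by omega]
    exact qpochA_pascal ha i j
  · simp [qbinomA_self ha (by omega : (0 : ℤ) ≤ n + 1), qbinomA_self ha (Int.natCast_nonneg n),
      qbinomA_eq_zero (a := a) (.inr (by omega : (n : ℤ) < n + 1))]
  · simp [qbinomA_eq_zero (a := a) (.inr hmn),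
      qbinomA_eq_zero (a := a) (.inr (by omega : (n : ℤ) < m)),
      qbinomA_eq_zero (a := a) (.inr (by omega : (n : ℤ) < m - 1))]

lemma qbinomA_succ_left' (ha : 0 < a) (n : ℕ) (m : ℤ) :
    qbinomA a ((n : ℤ) + 1) m = X ^ (a * m.toNat) * qbinomA a n m + qbinomA a n (m - 1) := by
  have h := qbinomA_succ_left ha n ((n : ℤ) - (m - 1))
  rw [show (n : ℤ) + 1 - (n - (m - 1)) = m by ring, show (n : ℤ) - (m - 1) - 1 = n - m by ring,
    qbinomA_sub_right, qbinomA_sub_right, show (n : ℤ) - (m - 1) = n + 1 - m by ring,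
    qbinomA_sub_right] at h
  rw [h, add_comm]

end QBinomial

lemma finsum_add_sub_comp_add_one {M : Type*} [AddCommGroup M] {g f : ℤ → M}
    (hg : g.HasFiniteSupport) (hf : f.HasFiniteSupport) :
    ∑ᶠ r, (g r + (f r - f (r + 1))) = ∑ᶠ r, g r := by
  have hshift : (f ∘ (· + 1)).HasFiniteSupport := by
    rw [Function.HasFiniteSupport, Function.support_comp_eq_preimage]
    exact hf.preimage (Set.injOn_of_injective (add_left_injective 1))
  have htelescope : ∑ᶠ r, (f r - f (r + 1)) = 0 := by
    refine (finsum_sub_distrib hf hshift).trans (sub_eq_zero.2 ?_)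
    exact (finsum_comp_equiv (Equiv.addRight 1)).symm
  have hdiff : (fun r => f r - f (r + 1)).HasFiniteSupport := hf.sub hshift
  rw [finsum_add_distrib hg hdiff, htelescope, add_zero]

lemma pow_toNat_add_mul {M : Type*} [MonoidWithZero M] (x : M) {w e : ℤ} (hw : 0 ≤ w) {φ : M}
    (hφ : e < 0 → φ = 0) : x ^ (w + e).toNat * φ = x ^ w.toNat * x ^ e.toNat * φ := by
  rcases lt_or_ge e 0 with he | he
  · simp [hφ he]
  · rw [← pow_add, show (w + e).toNat = w.toNat + e.toNat by omega]

lemma pentagonal_nonneg (r : ℤ) : 0 ≤ r * (3 * r + 1) / 2 := by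
  have : 0 ≤ r * (3 * r + 1) := by
    rcases le_or_gt 0 r with hr | hr
    · positivity
    · exact mul_nonneg_of_nonpos_of_nonpos hr.le (by omega)
  omega

lemma pentagonal_succ (r : ℤ) :
    (r + 1) * (3 * (r + 1) + 1) / 2 = r * (3 * r + 1) / 2 + (3 * r + 2) := by
  rw [show (r + 1) * (3 * (r + 1) + 1) = r * (3 * r + 1) + 2 * (3 * r + 2) by ring,
    Int.add_mul_ediv_left _ _ two_ne_zero]

noncomputable def pentagonalSummand (n : ℕ) (r : ℤ) : PowerSeries ℚ :=
  C ((-1 : ℚ) ^ r) * X ^ (r * (3 * r + 1) / 2).toNat * qbinom n (Int.fdiv ((n : ℤ) - 3 * r) 2)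

noncomputable def pentagonalFlux (n : ℕ) (r : ℤ) : PowerSeries ℚ :=
  if 2 ∣ (n : ℤ) + 1 - 3 * r then
    C ((-1 : ℚ) ^ r) * X ^ (r * (3 * r + 1) / 2 + ((n : ℤ) + 1 - 3 * r) / 2).toNat *
      qbinom n (((n : ℤ) + 1 - 3 * r) / 2)
  else 0

section PentagonalSummand

variable {n : ℕ} {r : ℤ}

lemma bounds_of_pentagonalSummand_ne_zero (h : pentagonalSummand n r ≠ 0) :
    0 ≤ ((n : ℤ) - 3 * r) / 2 ∧ ((n : ℤ) - 3 * r) / 2 ≤ n := by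
  rw [← Int.fdiv_eq_ediv_of_nonneg _ zero_le_two]
  exact nonneg_and_le_of_qbinomA_ne_zero (right_ne_zero_of_mul h)

lemma pentagonalSummand_hasFiniteSupport (n : ℕ) : (pentagonalSummand n).HasFiniteSupport :=
  (Set.finite_Icc (-(n : ℤ)) n).subset fun r hr => by
    have := bounds_of_pentagonalSummand_ne_zero hr
    simp only [Set.mem_Icc]
    omega

lemma pentagonalFlux_hasFiniteSupport (n : ℕ) : (pentagonalFlux n).HasFiniteSupport :=
  (Set.finite_Icc (-(n : ℤ)) (n + 1)).subset fun r hr => by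
    have hr : pentagonalFlux n r ≠ 0 := hr
    unfold pentagonalFlux at hr
    split_ifs at hr
    · have := nonneg_and_le_of_qbinomA_ne_zero (right_ne_zero_of_mul hr)
      simp only [Set.mem_Icc]
      omega
    · exact (hr rfl).elim

lemma finsum_pentagonalSummand_zero : ∑ᶠ r, pentagonalSummand 0 r = 1 := by
  rw [finsum_eq_single _ 0 fun r hr => by_contra fun h => by
    have := bounds_of_pentagonalSummand_ne_zero h
    omega]
  simp [pentagonalSummand, qbinom, qbinomA_self one_pos le_rfl]

lemma pentagonalSummand_succ_of_even {m : ℤ} (h : (n : ℤ) + 1 - 3 * r = 2 * m) :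
    pentagonalSummand (n + 1) r =
      pentagonalSummand n r + (pentagonalFlux n r - pentagonalFlux n (r + 1)) := by
  have hflux : pentagonalFlux n (r + 1) = 0 := if_neg (by omega)
  have hX := pow_toNat_add_mul X (pentagonal_nonneg r) (φ := qbinomA 1 n m)
    (fun hm => qbinomA_eq_zero (.inl hm))
  rw [hflux, sub_zero, pentagonalSummand, pentagonalSummand, pentagonalFlux, if_pos (by omega),
    Int.fdiv_eq_ediv_of_nonneg _ zero_le_two, Int.fdiv_eq_ediv_of_nonneg _ zero_le_two,
    show (((n + 1 : ℕ) : ℤ) - 3 * r) / 2 = m by omega, show ((n : ℤ) - 3 * r) / 2 = m - 1 by omega,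
    show ((n : ℤ) + 1 - 3 * r) / 2 = m by omega]
  simp only [qbinom, Nat.cast_succ, qbinomA_succ_left' one_pos, one_mul]
  linear_combination -C ((-1 : ℚ) ^ r) * hX

lemma pentagonalSummand_succ_of_odd {m : ℤ} (h : (n : ℤ) + 1 - 3 * r = 2 * m + 1) :
    pentagonalSummand (n + 1) r =
      pentagonalSummand n r + (pentagonalFlux n r - pentagonalFlux n (r + 1)) := by
  have hflux : pentagonalFlux n r = 0 := if_neg (by omega)
  have hX := pow_toNat_add_mul X (pentagonal_nonneg r) (e := (n : ℤ) + 1 - m)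
    (φ := qbinomA 1 n (m - 1)) (fun hm => qbinomA_eq_zero (.inr (by omega)))
  rw [hflux, zero_sub, pentagonalSummand, pentagonalSummand, pentagonalFlux, if_pos (by omega),
    Int.fdiv_eq_ediv_of_nonneg _ zero_le_two, Int.fdiv_eq_ediv_of_nonneg _ zero_le_two,
    show (((n + 1 : ℕ) : ℤ) - 3 * r) / 2 = m by omega, show ((n : ℤ) - 3 * r) / 2 = m by omega,
    show ((n : ℤ) + 1 - 3 * (r + 1)) / 2 = m - 1 by omega, pentagonal_succ,
    show r * (3 * r + 1) / 2 + (3 * r + 2) + (m - 1) = r * (3 * r + 1) / 2 + ((n : ℤ) + 1 - m) by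
      omega,
    zpow_add_one₀ (by norm_num : (-1 : ℚ) ≠ 0)]
  simp only [qbinom, Nat.cast_succ, qbinomA_succ_left one_pos, one_mul, map_mul, map_neg, map_one]
  linear_combination -C ((-1 : ℚ) ^ r) * hX

lemma pentagonalSummand_succ (n : ℕ) (r : ℤ) :
    pentagonalSummand (n + 1) r =
      pentagonalSummand n r + (pentagonalFlux n r - pentagonalFlux n (r + 1)) := by
  obtain ⟨m, hm | hm⟩ := Int.even_or_odd' ((n : ℤ) + 1 - 3 * r)
  · exact pentagonalSummand_succ_of_even hm
  · exact pentagonalSummand_succ_of_odd hm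

end PentagonalSummand

/-- `∑_{r ∈ ℤ} (-1)^r q^{r(3r+1)/2} [n choose ⌊(n-3r)/2⌋]_q = 1`. -/
theorem pentagonal_truncated (n : ℕ) :
    (∑ᶠ r : ℤ, (PowerSeries.C (R := ℚ)) ((-1 : ℚ) ^ r) *
        (PowerSeries.X : PowerSeries ℚ) ^ (r * (3 * r + 1) / 2).toNat *
        qbinom n (Int.fdiv ((n : ℤ) - 3 * r) 2)) = 1 := by
  change ∑ᶠ r, pentagonalSummand n r = 1
  induction n with
  | zero => exact finsum_pentagonalSummand_zero
  | succ n ih =>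
    rw [← ih, ← finsum_add_sub_comp_add_one (pentagonalSummand_hasFiniteSupport n)
      (pentagonalFlux_hasFiniteSupport n)]
    exact finsum_congr (pentagonalSummand_succ n)
end

section
/- For every nonnegative integer n, ∑_{r∈ℤ} (-1)^r q^{r(5r+1)/2 - 2r} [n choose ⌊(n-5r)/2⌋+1]_q = ∑_{j≥0, 2j≤n-1} q^{j²+j} [n-j-1 choose j]_q (a polynomial identity in q). -/
open PowerSeries Finset

/-! Both sides satisfy `f (n + 2) = f (n + 1) + q ^ (n + 1) * f n` with `f 0 = 0` and `f 1 = 1`.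
On the fermionic side `∑ q ^ (j² + j) [n - j - 1, j]` this is the q-Pascal rule applied
termwise. On the bosonic (alternating) side, two applications of q-Pascal show that each summand
satisfies the same recurrence up to a defect, and when `n - 5r` is even the defects at `r` and
`r - 1` carry the same Gaussian binomial with opposite signs, so the defects telescope away in
the sum over `r`. -/

lemma finsum_eq_zero_of_add_apply_sub_one {M : Type*} [AddCommGroup M] {f : ℤ → M}
    (hf : f.HasFiniteSupport) (c : ℤ) (h : ∀ r, Even (r - c) → f r + f (r - 1) = 0) :
    ∑ᶠ r, f r = 0 := by
  set g : ℤ → M := fun r => if Even (r - c) then 0 else f r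
  have hfg : ∀ r, f r = g r - g (r - 1) := by
    intro r
    by_cases hr : Even (r - c)
    · have hr' : ¬Even (r - 1 - c) := by rw [sub_right_comm, Int.even_sub_one]; exact not_not.2 hr
      simp only [g, if_pos hr, if_neg hr', zero_sub]
      exact eq_neg_of_add_eq_zero_left (h r hr)
    · have hr' : Even (r - 1 - c) := by rw [sub_right_comm, Int.even_sub_one]; exact hr
      simp only [g, if_neg hr, if_pos hr', sub_zero]
  have hg : g.HasFiniteSupport := hf.subset fun r hr => by
    by_cases hrc : Even (r - c)
    · simp [g, hrc] at hr
    · simpa [g, hrc] using hr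
  rw [finsum_congr hfg, finsum_sub_distrib hg (hg.fun_comp_of_injective sub_left_injective),
    ← finsum_comp_equiv (Equiv.subRight (1 : ℤ)) (f := g)]
  simp

lemma qpoch_zero : qpoch 0 = 1 := by simp [qpoch, qpochA]

lemma qpoch_succ (m : ℕ) : qpoch (m + 1) = qpoch m * (1 - X ^ (m + 1)) := by
  simp [qpoch, qpochA, prod_range_succ]

lemma constantCoeff_qpoch (m : ℕ) : constantCoeff (qpoch m) = 1 := by
  induction m with
  | zero => simp [qpoch, qpochA]
  | succ m ih => simp [qpoch_succ, ih]

lemma qpoch_mul_inv (m : ℕ) : qpoch m * (qpoch m)⁻¹ = 1 :=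
  PowerSeries.mul_inv_cancel _ (by simp [constantCoeff_qpoch])

lemma qpoch_inv_eq (m : ℕ) : (qpoch m)⁻¹ = (1 - X ^ (m + 1)) * (qpoch (m + 1))⁻¹ := by
  rw [qpoch_succ, PowerSeries.mul_inv_rev, ← mul_assoc, PowerSeries.mul_inv_cancel _ (by simp),
    one_mul]

lemma qbinom_of_eq_add (s t : ℕ) {N M : ℤ} (hM : M = s) (hN : N = s + t) :
    qbinom N M = qpoch (s + t) * (qpoch s)⁻¹ * (qpoch t)⁻¹ := by
  subst hM hN
  rw [qbinom, qbinomA, if_pos (by omega), add_sub_cancel_left]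
  simp only [Int.toNat_natCast, ← Nat.cast_add, qpoch]

lemma qbinom_eq_zero {N M : ℤ} (h : M < 0 ∨ N < M) : qbinom N M = 0 := by
  simp only [qbinom, qbinomA]
  rw [if_neg (by omega)]

lemma qbinom_symm (N M : ℤ) : qbinom N (N - M) = qbinom N M := by
  simp only [qbinom, qbinomA, sub_sub_cancel]
  by_cases h : 0 ≤ M ∧ M ≤ N
  · rw [if_pos (by omega), if_pos h, mul_right_comm]
  · rw [if_neg (by omega), if_neg h]

lemma qbinom_zero_right {N : ℤ} (hN : 0 ≤ N) : qbinom N 0 = 1 := by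
  rw [qbinom_of_eq_add 0 N.toNat (by simp) (by simp [hN]), zero_add, qpoch_zero, inv_one, mul_one,
    qpoch_mul_inv]

lemma qbinom_self {N : ℤ} (hN : 0 ≤ N) : qbinom N N = 1 := by
  rw [← qbinom_symm, sub_self, qbinom_zero_right hN]

lemma qbinom_succ_succ {N : ℤ} (hN : 0 ≤ N) (M : ℤ) :
    qbinom (N + 1) (M + 1) = qbinom N (M + 1) + X ^ (N - M).toNat * qbinom N M := by
  by_cases hvanish : M < -1 ∨ N < M
  · rw [qbinom_eq_zero (by omega), qbinom_eq_zero (by omega), qbinom_eq_zero (by omega), mul_zero,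
      add_zero]
  rcases (show M = -1 ∨ M = N ∨ 0 ≤ M ∧ M < N by omega) with rfl | rfl | ⟨hM, hMN⟩
  · rw [neg_add_cancel, qbinom_zero_right (by omega), qbinom_zero_right hN,
      qbinom_eq_zero (by omega), mul_zero, add_zero]
  · rw [qbinom_self (by omega), qbinom_eq_zero (by omega), qbinom_self hN, sub_self,
      Int.toNat_zero, pow_zero, zero_add, one_mul]
  · lift M to ℕ using hM with s
    obtain ⟨t, rfl⟩ : ∃ t : ℕ, N = s + t + 1 := ⟨(N - s - 1).toNat, by omega⟩
    rw [qbinom_of_eq_add (s + 1) (t + 1) (by omega) (by omega),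
      qbinom_of_eq_add (s + 1) t (by omega) (by omega),
      qbinom_of_eq_add s (t + 1) (by omega) (by omega),
      show ((s : ℤ) + t + 1 - s).toNat = t + 1 by omega, qpoch_inv_eq s, qpoch_inv_eq t,
      show s + 1 + (t + 1) = s + t + 1 + 1 by ring, show s + 1 + t = s + t + 1 by ring,
      show s + (t + 1) = s + t + 1 by ring, qpoch_succ (s + t + 1)]
    ring

lemma qbinom_succ_succ' {N : ℤ} (hN : 0 ≤ N) (M : ℤ) :
    qbinom (N + 1) (M + 1) = X ^ (M + 1).toNat * qbinom N (M + 1) + qbinom N M := by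
  rw [← qbinom_symm, show N + 1 - (M + 1) = N - M - 1 + 1 by ring, qbinom_succ_succ hN,
    sub_add_cancel, qbinom_symm, show N - (N - M - 1) = M + 1 by ring,
    show N - M - 1 = N - (M + 1) by ring, qbinom_symm, add_comm]

lemma X_pow_mul_qbinom_congr {N M : ℤ} {a b : ℕ} (h : 0 ≤ M → M ≤ N → a = b) :
    X ^ a * qbinom N M = X ^ b * qbinom N M := by
  by_cases hM : 0 ≤ M ∧ M ≤ N
  · rw [h hM.1 hM.2]
  · rw [qbinom_eq_zero (by omega), mul_zero, mul_zero]

lemma qbinom_add_two_succ (N : ℕ) (M : ℤ) :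
    qbinom (N + 2) (M + 1) =
      qbinom (N + 1) M + X ^ (N + 1) * qbinom N M + X ^ (M + 1).toNat * qbinom N (M + 1) := by
  have hpow : X ^ (M + 1).toNat * (X ^ ((N : ℤ) - M).toNat * qbinom N M) =
      X ^ (N + 1) * qbinom N M := by
    rw [← mul_assoc, ← pow_add]
    exact X_pow_mul_qbinom_congr (by omega)
  rw [show (N : ℤ) + 2 = N + 1 + 1 by ring, qbinom_succ_succ' (by positivity),
    qbinom_succ_succ N.cast_nonneg M]
  linear_combination hpow

lemma qbinom_add_two_succ' (N : ℕ) (M : ℤ) :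
    qbinom (N + 2) (M + 1) =
      qbinom (N + 1) (M + 1) + X ^ (N + 1) * qbinom N M +
        X ^ (N + 1 - M).toNat * qbinom N (M - 1) := by
  have hpascal : qbinom (N + 1) M = X ^ M.toNat * qbinom N M + qbinom N (M - 1) := by
    simpa using qbinom_succ_succ' N.cast_nonneg (M - 1)
  have hpow : X ^ ((N : ℤ) + 1 - M).toNat * (X ^ M.toNat * qbinom N M) =
      X ^ (N + 1) * qbinom N M := by
    rw [← mul_assoc, ← pow_add]
    exact X_pow_mul_qbinom_congr (by omega)
  rw [show (N : ℤ) + 2 = N + 1 + 1 by ring, qbinom_succ_succ (by positivity), hpascal]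
  linear_combination hpow

def bosonicExponent (r : ℤ) : ℕ := (r * (5 * r + 1) / 2 - 2 * r).toNat

noncomputable def bosonicTerm (n : ℕ) (r : ℤ) : PowerSeries ℚ :=
  C ((-1 : ℚ) ^ r) * X ^ bosonicExponent r * qbinom n (Int.fdiv ((n : ℤ) - 5 * r) 2 + 1)

noncomputable def bosonicSum (n : ℕ) : PowerSeries ℚ := ∑ᶠ r : ℤ, bosonicTerm n r

lemma two_mul_bosonicExponent (r : ℤ) : 2 * (bosonicExponent r : ℤ) = 5 * r ^ 2 - 3 * r := by
  have heven : r * (5 * r + 1) % 2 = 0 := by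
    rcases Int.emod_two_eq_zero_or_one r with h | h <;> simp [Int.mul_emod, Int.add_emod, h]
  have hdiv := Int.ediv_mul_cancel_of_emod_eq_zero heven
  have hnonneg : 0 ≤ r * (5 * r + 1) / 2 - 2 * r := by
    have : 0 ≤ r * (r - 1) := by rcases le_or_gt r 0 with h | h <;> nlinarith
    nlinarith [sq_nonneg r]
  rw [bosonicExponent, Int.toNat_of_nonneg hnonneg]
  linear_combination hdiv

lemma bosonicExponent_sub_one (r : ℤ) :
    (bosonicExponent (r - 1) : ℤ) + 5 * r = bosonicExponent r + 4 := by
  have h : 2 * ((bosonicExponent (r - 1) : ℤ) + 5 * r) = 2 * (bosonicExponent r + 4) := by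
    linear_combination two_mul_bosonicExponent (r - 1) - two_mul_bosonicExponent r
  omega

lemma bosonicTerm_of_le {n : ℕ} {r : ℤ} (m : ℤ) (hm : 2 * m - 2 ≤ (n : ℤ) - 5 * r)
    (hm' : (n : ℤ) - 5 * r ≤ 2 * m - 1) :
    bosonicTerm n r = C ((-1 : ℚ) ^ r) * X ^ bosonicExponent r * qbinom n m := by
  rw [bosonicTerm, Int.fdiv_eq_ediv_of_nonneg _ two_pos.le,
    show ((n : ℤ) - 5 * r) / 2 + 1 = m by omega]

lemma bosonicTerm_eq_zero {n : ℕ} {r : ℤ} (h : (n : ℤ) + 2 < 5 * r ∨ 5 * r + n < 1) :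
    bosonicTerm n r = 0 := by
  rw [bosonicTerm, qbinom_eq_zero (by rw [Int.fdiv_eq_ediv_of_nonneg _ two_pos.le]; omega),
    mul_zero]

@[fun_prop]
lemma bosonicTerm_hasFiniteSupport (n : ℕ) : (bosonicTerm n).HasFiniteSupport :=
  (Set.finite_Icc (-(n : ℤ)) n).subset fun r hr => by
    by_contra hmem
    exact hr (bosonicTerm_eq_zero (by simp only [Set.mem_Icc] at hmem; omega))

noncomputable def bosonicDefect (n : ℕ) (r : ℤ) : PowerSeries ℚ :=
  bosonicTerm (n + 2) r - bosonicTerm (n + 1) r - X ^ (n + 1) * bosonicTerm n r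

lemma bosonicDefect_hasFiniteSupport (n : ℕ) : (bosonicDefect n).HasFiniteSupport := by
  unfold bosonicDefect
  fun_prop

lemma bosonicDefect_of_even {n : ℕ} {r m : ℤ} (h : (n : ℤ) - 5 * r = 2 * m - 2) :
    bosonicDefect n r =
      C ((-1 : ℚ) ^ r) * X ^ bosonicExponent r * (X ^ (m + 1).toNat * qbinom n (m + 1)) := by
  rw [bosonicDefect, bosonicTerm_of_le (n := n + 2) (m + 1) (by omega) (by omega),
    bosonicTerm_of_le (n := n + 1) m (by omega) (by omega),
    bosonicTerm_of_le (n := n) m (by omega) (by omega)]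
  push_cast
  linear_combination C ((-1 : ℚ) ^ r) * X ^ bosonicExponent r * qbinom_add_two_succ n m

lemma bosonicDefect_of_odd {n : ℕ} {r m : ℤ} (h : (n : ℤ) - 5 * r = 2 * m - 1) :
    bosonicDefect n r =
      C ((-1 : ℚ) ^ r) * X ^ bosonicExponent r * (X ^ (n + 1 - m).toNat * qbinom n (m - 1)) := by
  rw [bosonicDefect, bosonicTerm_of_le (n := n + 2) (m + 1) (by omega) (by omega),
    bosonicTerm_of_le (n := n + 1) (m + 1) (by omega) (by omega),
    bosonicTerm_of_le (n := n) m (by omega) (by omega)]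
  push_cast
  linear_combination C ((-1 : ℚ) ^ r) * X ^ bosonicExponent r * qbinom_add_two_succ' n m

lemma bosonicDefect_add_bosonicDefect_sub_one {n : ℕ} {r m : ℤ}
    (h : (n : ℤ) - 5 * r = 2 * m - 2) : bosonicDefect n r + bosonicDefect n (r - 1) = 0 := by
  have hexp : X ^ bosonicExponent r * (X ^ (m + 1).toNat * qbinom n (m + 1)) =
      X ^ bosonicExponent (r - 1) * (X ^ ((n : ℤ) + 1 - (m + 2)).toNat * qbinom n (m + 1)) := by
    rw [← mul_assoc, ← mul_assoc, ← pow_add, ← pow_add]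
    exact X_pow_mul_qbinom_congr fun _ _ => by have := bosonicExponent_sub_one r; omega
  rw [bosonicDefect_of_even h, bosonicDefect_of_odd (m := m + 2) (by omega),
    show m + 2 - 1 = m + 1 by ring, zpow_sub_one₀ (by norm_num), mul_assoc, mul_assoc, ← hexp]
  simp only [inv_neg, inv_one, mul_neg, mul_one, map_neg, neg_mul, add_neg_cancel]

lemma finsum_bosonicDefect (n : ℕ) : ∑ᶠ r, bosonicDefect n r = 0 :=
  finsum_eq_zero_of_add_apply_sub_one (bosonicDefect_hasFiniteSupport n) n fun r ⟨j, hj⟩ =>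
    bosonicDefect_add_bosonicDefect_sub_one (m := 1 - j - 2 * r) (by omega)

lemma bosonicSum_add_two (n : ℕ) :
    bosonicSum (n + 2) = bosonicSum (n + 1) + X ^ (n + 1) * bosonicSum n := by
  have hsplit : ∀ r, bosonicTerm (n + 2) r =
      bosonicTerm (n + 1) r + X ^ (n + 1) * bosonicTerm n r + bosonicDefect n r := fun r => by
    rw [bosonicDefect]; ring
  rw [bosonicSum, finsum_congr hsplit, finsum_add_distrib (by fun_prop)
    (bosonicDefect_hasFiniteSupport n), finsum_add_distrib (by fun_prop) (by fun_prop),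
    finsum_bosonicDefect, add_zero, ← mul_finsum, bosonicSum, bosonicSum]

lemma bosonicSum_zero : bosonicSum 0 = 0 :=
  finsum_eq_zero_of_forall_eq_zero fun _ => bosonicTerm_eq_zero (by omega)

lemma bosonicSum_one : bosonicSum 1 = 1 := by
  rw [bosonicSum, finsum_eq_single _ 0 fun r hr => bosonicTerm_eq_zero (by omega),
    bosonicTerm_of_le 1 (by omega) (by omega), Nat.cast_one, qbinom_self zero_le_one]
  simp [bosonicExponent]

noncomputable def fermionicTerm (n j : ℕ) : PowerSeries ℚ :=
  X ^ (j ^ 2 + j) * qbinom ((n : ℤ) - j - 1) j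

noncomputable def fermionicSum (n : ℕ) : PowerSeries ℚ := ∑ j ∈ range n, fermionicTerm n j

lemma fermionicTerm_eq_zero {n j : ℕ} (h : n < 2 * j + 1) : fermionicTerm n j = 0 := by
  rw [fermionicTerm, qbinom_eq_zero (by omega), mul_zero]

lemma sum_range_fermionicTerm {n m : ℕ} (h : n ≤ m) :
    ∑ j ∈ range m, fermionicTerm n j = fermionicSum n :=
  (sum_subset (range_subset_range.2 h) fun _ _ hj =>
    fermionicTerm_eq_zero (by simp only [mem_range] at hj; omega)).symm

lemma fermionicTerm_add_two_zero (n : ℕ) : fermionicTerm (n + 2) 0 = fermionicTerm (n + 1) 0 := by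
  simp only [fermionicTerm, Nat.cast_zero]
  rw [qbinom_zero_right (by omega), qbinom_zero_right (by omega)]

lemma fermionicTerm_add_two_succ (n j : ℕ) :
    fermionicTerm (n + 2) (j + 1) =
      fermionicTerm (n + 1) (j + 1) + X ^ (n + 1) * fermionicTerm n j := by
  by_cases hj : n < 2 * j + 1
  · rw [fermionicTerm_eq_zero (by omega), fermionicTerm_eq_zero (by omega),
      fermionicTerm_eq_zero hj, mul_zero, add_zero]
  obtain ⟨d, rfl⟩ : ∃ d, n = 2 * j + 1 + d := ⟨n - (2 * j + 1), by omega⟩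
  simp only [fermionicTerm]
  push_cast
  rw [show (2 * j + 1 + d + 2 - (j + 1) - 1 : ℤ) = d + j + 1 by ring,
    show (2 * j + 1 + d + 1 - (j + 1) - 1 : ℤ) = d + j by ring,
    show (2 * j + 1 + d - j - 1 : ℤ) = d + j by ring,
    qbinom_succ_succ (by positivity), show ((d : ℤ) + j - j).toNat = d by omega]
  ring

lemma fermionicSum_one : fermionicSum 1 = 1 := by
  simp [fermionicSum, fermionicTerm, qbinom_self]

lemma fermionicSum_add_two (n : ℕ) :
    fermionicSum (n + 2) = fermionicSum (n + 1) + X ^ (n + 1) * fermionicSum n := by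
  rw [fermionicSum, sum_range_succ', ← sum_range_fermionicTerm (n + 1).le_succ,
    ← sum_range_fermionicTerm n.le_succ, sum_range_succ' _ (n + 1)]
  simp only [fermionicTerm_add_two_succ, sum_add_distrib, mul_sum, fermionicTerm_add_two_zero]
  ring

lemma bosonicSum_eq_fermionicSum (n : ℕ) : bosonicSum n = fermionicSum n := by
  induction n using Nat.twoStepInduction with
  | zero => rw [bosonicSum_zero, fermionicSum, range_zero, sum_empty]
  | one => rw [bosonicSum_one, fermionicSum_one]
  | more n ih₀ ih₁ => rw [bosonicSum_add_two, fermionicSum_add_two, ih₀, ih₁]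

/-- Andrews' finitization of the second Rogers–Ramanujan identity:
`∑_{r∈ℤ} (-1)^r q^{r(5r+1)/2 - 2r} [n choose ⌊(n-5r)/2⌋+1]_q
  = ∑_{j ≥ 0, 2j ≤ n-1} q^{j²+j} [n-j-1 choose j]_q`. -/
theorem rogersRamanujan_finitization_second (n : ℕ) :
    (∑ᶠ r : ℤ, (PowerSeries.C (R := ℚ)) ((-1 : ℚ) ^ r) *
        (PowerSeries.X : PowerSeries ℚ) ^ (r * (5 * r + 1) / 2 - 2 * r).toNat *
        qbinom n (Int.fdiv ((n : ℤ) - 5 * r) 2 + 1)) =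
      ∑ j ∈ (Finset.range (n + 1)).filter (fun j => 2 * j + 1 ≤ n),
        (PowerSeries.X : PowerSeries ℚ) ^ (j ^ 2 + j) * qbinom ((n : ℤ) - j - 1) j := by
  calc _ = bosonicSum n := rfl
    _ = fermionicSum n := bosonicSum_eq_fermionicSum n
    _ = ∑ j ∈ range (n + 1), fermionicTerm n j := (sum_range_fermionicTerm n.le_succ).symm
    _ = _ := (sum_filter_of_ne fun j _ hj => ?_).symm
  by_contra hlt
  exact hj (fermionicTerm_eq_zero (by omega))
end

section
/- As formal power series in q with |q|<1, ∏_{n≥1, n≡±2 (mod 5)} (1-q^n)^{-1} = ∑_{r≥0} q^{r²+r}/(q)_r. -/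
/-!
Schur's proof by polynomial identities. Multiply both sides by `(q)_d` and compare each, modulo
`q^(d+1)`, with the theta series `Θ = ∑_j (-1)^j q^(j(5j+3)/2)`.

Product side: `(q)_∞ / ∏_{n ≡ ±2 (5)} (1 - q^n) = (q^5; q^5)_∞ ∏_i (1 - q^(5i+1)) (1 - q^(5i+4))`,
and the finite Jacobi triple product (Cauchy's `q`-binomial theorem with `y = q^(5N+1)`,
`z = -q^5`) writes the last product as `∑_j (-1)^j q^(j(5j+3)/2) [2N, N+j]_{q^5}`. In low degree each
Gaussian binomial `[n, k]` with `k` and `n - k` large is `1 / (q)_∞`.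

Sum side: Schur's polynomials `e_n = ∑_r q^(r²+r) [n-r, r]` and
`d_n = ∑_j (-1)^j q^(j(5j+3)/2) [n+1, ⌊(n-5j)/2⌋]` satisfy the same recurrence
`x_(n+2) = x_(n+1) + q^(n+2) x_n` with `x_0 = x_1 = 1` (for `d_n` by a telescoping sum), and for
large `n` they are congruent to `∑_r q^(r²+r) / (q)_r` and `Θ / (q)_∞` respectively.
-/

open PowerSeries Finset

namespace RogersRamanujan

section Congruence

variable {A : Type*} [CommRing A] {I : Ideal A}

theorem prod_range_smodEq_of_smodEq_one (f : ℕ → A) {d M : ℕ} (hdM : d ≤ M)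
    (hf : ∀ n, d ≤ n → n < M → f n ≡ 1 [SMOD I]) :
    ∏ n ∈ range d, f n ≡ ∏ n ∈ range M, f n [SMOD I] := by
  obtain ⟨t, rfl⟩ := Nat.exists_eq_add_of_le hdM
  have htail : ∏ n ∈ range t, f (d + n) ≡ ∏ _n ∈ range t, 1 [SMOD I] :=
    SModEq.prod fun n hn => hf _ (by omega) (by simp at hn; omega)
  rw [prod_range_add]
  simpa using (SModEq.refl (∏ n ∈ range d, f n)).mul htail.symm

theorem sum_range_smodEq_of_smodEq_zero (f : ℕ → A) {d M : ℕ} (hdM : d ≤ M)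
    (hf : ∀ n, d ≤ n → n < M → f n ≡ 0 [SMOD I]) :
    ∑ n ∈ range d, f n ≡ ∑ n ∈ range M, f n [SMOD I] := by
  obtain ⟨t, rfl⟩ := Nat.exists_eq_add_of_le hdM
  have htail : ∑ n ∈ range t, f (d + n) ≡ ∑ _n ∈ range t, 0 [SMOD I] :=
    SModEq.sum fun n hn => hf _ (by omega) (by simp at hn; omega)
  rw [sum_range_add]
  simpa using (SModEq.refl (∑ n ∈ range d, f n)).add htail.symm

theorem smodEq_of_isUnit_mul {u f g : A} (hu : IsUnit u) (h : u * f ≡ u * g [SMOD I]) :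
    f ≡ g [SMOD I] := by
  obtain ⟨v, rfl⟩ := hu
  simpa using (SModEq.refl (↑v⁻¹ : A)).mul h

end Congruence

section PowerSeries

variable {R : Type*} [CommRing R]

theorem coeff_eq_of_smodEq {d i : ℕ} {f g : R⟦X⟧} (h : f ≡ g [SMOD Ideal.span {X ^ (d + 1)}])
    (hi : i ≤ d) : coeff i f = coeff i g := by
  rw [SModEq.sub_mem, Ideal.mem_span_singleton, X_pow_dvd_iff] at h
  simpa [sub_eq_zero] using h i (by omega)

theorem X_pow_mul_smodEq {d e : ℕ} {f g : R⟦X⟧}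
    (h : e ≤ d → f ≡ g [SMOD Ideal.span {X ^ (d + 1)}]) :
    X ^ e * f ≡ X ^ e * g [SMOD Ideal.span {X ^ (d + 1)}] := by
  by_cases he : e ≤ d
  · exact (SModEq.refl _).mul (h he)
  · rw [SModEq.sub_mem, Ideal.mem_span_singleton, ← mul_sub]
    exact (pow_dvd_pow X (by omega)).mul_right _

theorem one_sub_X_pow_smodEq_one {d e : ℕ} (he : d < e) :
    (1 - X ^ e : R⟦X⟧) ≡ 1 [SMOD Ideal.span {X ^ (d + 1)}] := by
  rw [SModEq.sub_mem, Ideal.mem_span_singleton, sub_sub_cancel_left, dvd_neg]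
  exact pow_dvd_pow X he

end PowerSeries

theorem qpochA_succ (a m : ℕ) : qpochA a (m + 1) = qpochA a m * (1 - X ^ (a * (m + 1))) :=
  prod_range_succ _ _

theorem isUnit_qpochA {a : ℕ} (ha : 0 < a) (m : ℕ) : IsUnit (qpochA a m) := by
  rw [isUnit_iff_constantCoeff]
  simp [qpochA, map_prod, ha.ne']

/-- `[n, k]_{q^a}` through the `q`-Pascal rule, for every integer `k` (zero outside `0 ≤ k ≤ n`). -/
noncomputable def gaussBinom (a : ℕ) : ℕ → ℤ → ℚ⟦X⟧
  | 0, k => if k = 0 then 1 else 0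
  | n + 1, k => gaussBinom a n k + X ^ (a * (n + 1 - k).toNat) * gaussBinom a n (k - 1)

section GaussBinom

variable {a : ℕ}

theorem gaussBinom_succ (n : ℕ) (k : ℤ) :
    gaussBinom a (n + 1) k =
      gaussBinom a n k + X ^ (a * (n + 1 - k).toNat) * gaussBinom a n (k - 1) := rfl

theorem gaussBinom_eq_zero_of_neg {n : ℕ} {k : ℤ} (hk : k < 0) : gaussBinom a n k = 0 := by
  induction n generalizing k with
  | zero => simp [gaussBinom, hk.ne]
  | succ n ih => rw [gaussBinom_succ, ih hk, ih (by omega), mul_zero, add_zero]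

theorem gaussBinom_eq_zero_of_lt {n : ℕ} {k : ℤ} (hk : n < k) : gaussBinom a n k = 0 := by
  induction n generalizing k with
  | zero => simp [gaussBinom]; omega
  | succ n ih => rw [gaussBinom_succ, ih (by omega), ih (by omega), mul_zero, add_zero]

@[simp] theorem gaussBinom_zero_right (n : ℕ) : gaussBinom a n 0 = 1 := by
  induction n with
  | zero => simp [gaussBinom]
  | succ n ih => rw [gaussBinom_succ, ih, gaussBinom_eq_zero_of_neg (by omega), mul_zero, add_zero]

@[simp] theorem gaussBinom_self (n : ℕ) : gaussBinom a n n = 1 := by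
  induction n with
  | zero => simp [gaussBinom]
  | succ n ih =>
    rw [gaussBinom_succ, gaussBinom_eq_zero_of_lt (by omega)]
    simpa using ih

theorem gaussBinom_succ_natCast_succ (n k : ℕ) :
    gaussBinom a (n + 1) (k + 1 : ℕ) =
      gaussBinom a n (k + 1 : ℕ) + X ^ (a * (n - k)) * gaussBinom a n k := by
  rw [gaussBinom_succ]
  congr 4
  · omega
  · push_cast; ring

theorem X_pow_mul_gaussBinom_congr {n e₁ e₂ : ℕ} {k : ℤ} (h : 0 ≤ k → k ≤ n → e₁ = e₂) :
    X ^ e₁ * gaussBinom a n k = X ^ e₂ * gaussBinom a n k := by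
  by_cases hk : 0 ≤ k ∧ k ≤ n
  · rw [h hk.1 hk.2]
  · rcases not_and_or.1 hk with hk | hk
    · rw [gaussBinom_eq_zero_of_neg (not_le.1 hk), mul_zero, mul_zero]
    · rw [gaussBinom_eq_zero_of_lt (not_le.1 hk), mul_zero, mul_zero]

theorem gaussBinom_mul_qpochA_mul_qpochA {n k : ℕ} (hk : k ≤ n) :
    gaussBinom a n k * qpochA a k * qpochA a (n - k) = qpochA a n := by
  induction n generalizing k with
  | zero => simp_all [qpochA]
  | succ n ih =>
    rcases k with _ | k
    · simp [qpochA]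
    rcases hk.eq_or_lt with hk | hk
    · obtain rfl : k = n := by omega
      rw [Nat.sub_self, gaussBinom_self]
      simp [qpochA]
    have h1 := ih (k := k + 1) (by omega)
    have h2 := ih (k := k) (by omega)
    rw [qpochA_succ] at h1
    rw [show n - k = n - (k + 1) + 1 by omega, qpochA_succ,
      show n - (k + 1) + 1 = n - k by omega] at h2
    rw [gaussBinom_succ_natCast_succ, show n + 1 - (k + 1) = n - (k + 1) + 1 by omega, qpochA_succ,
      qpochA_succ, qpochA_succ, show a * (n + 1) = a * (n - k) + a * (k + 1) by
        rw [← mul_add]; congr 1; omega, pow_add, show n - (k + 1) + 1 = n - k by omega]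
    linear_combination (1 - X ^ (a * (n - k))) * h1 +
      X ^ (a * (n - k)) * (1 - X ^ (a * (k + 1))) * h2

theorem gaussBinom_symm (ha : 0 < a) (n : ℕ) (k : ℤ) :
    gaussBinom a n (n - k) = gaussBinom a n k := by
  rcases lt_or_ge k 0 with hk | hk
  · rw [gaussBinom_eq_zero_of_neg hk, gaussBinom_eq_zero_of_lt (by omega)]
  rcases lt_or_ge (n : ℤ) k with hkn | hkn
  · rw [gaussBinom_eq_zero_of_lt hkn, gaussBinom_eq_zero_of_neg (by omega)]
  lift k to ℕ using hk
  have hk : k ≤ n := by omega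
  have h1 := gaussBinom_mul_qpochA_mul_qpochA (a := a) hk
  have h2 := gaussBinom_mul_qpochA_mul_qpochA (a := a) (Nat.sub_le n k)
  rw [Nat.sub_sub_self hk, ← h1, Nat.cast_sub hk, mul_right_comm] at h2
  exact mul_right_cancel₀ ((isUnit_qpochA ha _).mul (isUnit_qpochA ha _)).ne_zero
    (by simpa only [mul_assoc] using h2)

theorem gaussBinom_succ' (ha : 0 < a) (n : ℕ) (k : ℤ) :
    gaussBinom a (n + 1) k = X ^ (a * k.toNat) * gaussBinom a n k + gaussBinom a n (k - 1) := by
  rw [← gaussBinom_symm ha (n + 1) k, gaussBinom_succ, ← gaussBinom_symm ha n (k - 1),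
    ← gaussBinom_symm ha n k]
  push_cast
  ring_nf

theorem gaussBinom_add_two (ha : 0 < a) (n : ℕ) (m : ℤ) :
    gaussBinom a (n + 2) m = gaussBinom a (n + 1) (m - 1) +
      X ^ (a * (n + 1)) * gaussBinom a n (m - 1) + X ^ (a * m.toNat) * gaussBinom a n m := by
  have h : X ^ (a * m.toNat) * X ^ (a * ((n : ℤ) + 1 - m).toNat) * gaussBinom a n (m - 1) =
      X ^ (a * (n + 1)) * gaussBinom a n (m - 1) := by
    rw [← pow_add]
    exact X_pow_mul_gaussBinom_congr fun _ _ => by rw [← mul_add]; congr 1; omega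
  rw [gaussBinom_succ' ha (n + 1), gaussBinom_succ n m]
  linear_combination h

theorem gaussBinom_add_two' (ha : 0 < a) (n : ℕ) (m : ℤ) :
    gaussBinom a (n + 2) m = gaussBinom a (n + 1) m +
      X ^ (a * (n + 1)) * gaussBinom a n (m - 1) +
        X ^ (a * ((n : ℤ) + 2 - m).toNat) * gaussBinom a n (m - 2) := by
  have h : X ^ (a * ((n : ℤ) + 2 - m).toNat) * X ^ (a * (m - 1).toNat) * gaussBinom a n (m - 1) =
      X ^ (a * (n + 1)) * gaussBinom a n (m - 1) := by
    rw [← pow_add]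
    exact X_pow_mul_gaussBinom_congr fun _ _ => by rw [← mul_add]; congr 1; omega
  rw [gaussBinom_succ (n + 1), gaussBinom_succ' ha n (m - 1), show m - 1 - 1 = m - 2 by ring]
  push_cast
  rw [show (n : ℤ) + 1 + 1 = n + 2 by ring]
  linear_combination h

end GaussBinom

end RogersRamanujan

namespace RogersRamanujan

/-- Cauchy's `q`-binomial theorem, homogenised in `y` so that no negative powers of `q` occur. -/
theorem prod_add_mul_X_pow_eq_sum_gaussBinom (a m : ℕ) (y z : ℚ⟦X⟧) :
    ∏ i ∈ range m, (y + z * X ^ (a * i)) =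
      ∑ k ∈ range (m + 1), X ^ (a * k.choose 2) * z ^ k * y ^ (m - k) * gaussBinom a m k := by
  induction m with
  | zero => simp
  | succ m ih =>
    let T (m k : ℕ) : ℚ⟦X⟧ := X ^ (a * k.choose 2) * z ^ k * y ^ (m - k) * gaussBinom a m k
    have hpascal : ∀ k ∈ range (m + 1),
        T (m + 1) (k + 1) = y * T m (k + 1) + z * X ^ (a * m) * T m k := by
      intro k hk
      simp only [T, gaussBinom_succ_natCast_succ, Nat.choose_succ_succ', Nat.choose_one_right]
      rcases Nat.lt_or_ge k m with hkm | hkm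
      · rw [show m + 1 - (k + 1) = m - (k + 1) + 1 by omega, show m - k = m - (k + 1) + 1 by omega,
          show a * m = a * k + a * (m - (k + 1) + 1) by rw [← mul_add]; congr 1; omega]
        ring
      · obtain rfl : k = m := by simp at hk; omega
        rw [gaussBinom_eq_zero_of_lt (by omega), Nat.sub_self, Nat.sub_self]
        ring
    have hshift : ∑ k ∈ range (m + 1), T m (k + 1) + T m 0 = ∑ k ∈ range (m + 1), T m k := by
      rw [← sum_range_succ', sum_range_succ, add_eq_left]
      exact mul_eq_zero_of_right _ (gaussBinom_eq_zero_of_lt (by omega))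
    have hzero : T (m + 1) 0 = y * T m 0 := by simp [T, pow_succ, mul_comm]
    rw [prod_range_succ, ih]
    change (∑ k ∈ range (m + 1), T m k) * _ = ∑ k ∈ range (m + 2), T (m + 1) k
    rw [sum_range_succ' (T (m + 1)), sum_congr rfl hpascal, sum_add_distrib, ← mul_sum, ← mul_sum]
    linear_combination (-y) * hshift - hzero

def thetaExp (j : ℤ) : ℕ := ((5 * j ^ 2 + 3 * j) / 2).toNat

theorem thetaExp_mul_two (j : ℤ) : (thetaExp j : ℤ) * 2 = 5 * j ^ 2 + 3 * j := by
  have heven : 2 ∣ 5 * j ^ 2 + 3 * j := by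
    rw [show 5 * j ^ 2 + 3 * j = j * (j + 1) + 2 * (2 * j ^ 2 + j) by ring]
    exact (Int.even_mul_succ_self j).two_dvd.add (dvd_mul_right 2 _)
  have hnonneg : 0 ≤ 5 * j ^ 2 + 3 * j := by nlinarith [sq_nonneg (j + 1)]
  unfold thetaExp
  generalize 5 * j ^ 2 + 3 * j = t at *
  omega

@[simp] theorem thetaExp_zero : thetaExp 0 = 0 := rfl

theorem thetaExp_succ (j : ℤ) : (thetaExp (j + 1) : ℤ) = thetaExp j + 5 * j + 4 := by
  linarith [thetaExp_mul_two j, thetaExp_mul_two (j + 1)]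

theorem natAbs_le_thetaExp (j : ℤ) : j.natAbs ≤ thetaExp j := by
  have h := thetaExp_mul_two j
  zify
  rcases abs_cases j with ⟨hj, _⟩ | ⟨hj, _⟩ <;> rw [hj] <;> nlinarith

/-- `∑_{|j| ≤ J} (-1)^j q^{j(5j+3)/2} B_j`, indexed by `k = J + j`. -/
noncomputable def thetaSum (J : ℕ) (B : ℤ → ℚ⟦X⟧) : ℚ⟦X⟧ :=
  ∑ k ∈ range (2 * J + 1), (-1) ^ (k + J) * X ^ thetaExp (k - J) * B (k - J)

theorem five_mul_choose_two_add_eq_thetaExp {N k : ℕ} (hk : k ≤ 2 * N) :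
    5 * k.choose 2 + 5 * k + (5 * N + 1) * (2 * N - k) =
      5 * (N + 1).choose 2 + (5 * N + 1) * N + thetaExp (k - N) := by
  have h : (thetaExp (k - N) : ℚ) * 2 = 5 * ((k : ℚ) - N) ^ 2 + 3 * ((k : ℚ) - N) := by
    exact_mod_cast thetaExp_mul_two (k - N)
  apply Nat.cast_injective (R := ℚ)
  push_cast [Nat.cast_sub hk, Nat.cast_choose_two]
  linear_combination (-1 / 2 : ℚ) * h

theorem sum_range_five_mul_succ (N : ℕ) : ∑ i ∈ range N, 5 * (i + 1) = 5 * (N + 1).choose 2 := by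
  induction N with
  | zero => rfl
  | succ N ih =>
    rw [sum_range_succ, ih, Nat.choose_succ_succ' (N + 1), Nat.choose_one_right]
    ring

theorem prod_X_pow_sub_X_pow (N : ℕ) :
    ∏ i ∈ range (2 * N), (X ^ (5 * N + 1) - X ^ 5 * X ^ (5 * i) : ℚ⟦X⟧) =
      (-1) ^ N * X ^ (5 * (N + 1).choose 2 + (5 * N + 1) * N) *
        ∏ i ∈ range N, ((1 - X ^ (5 * i + 1)) * (1 - X ^ (5 * i + 4))) := by
  have hlow : ∀ i ∈ range N, (X ^ (5 * N + 1) - X ^ 5 * X ^ (5 * i) : ℚ⟦X⟧) =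
      -1 * X ^ (5 * (i + 1)) * (1 - X ^ (5 * (N - 1 - i) + 1)) := by
    intro i hi
    rw [show 5 * N + 1 = 5 * (i + 1) + (5 * (N - 1 - i) + 1) by simp at hi; omega, pow_add,
      ← pow_add X 5, show 5 + 5 * i = 5 * (i + 1) by ring]
    ring
  have hhigh : ∀ i ∈ range N, (X ^ (5 * N + 1) - X ^ 5 * X ^ (5 * (N + i)) : ℚ⟦X⟧) =
      X ^ (5 * N + 1) * (1 - X ^ (5 * i + 4)) := by
    intro i _
    rw [mul_sub, mul_one, ← pow_add, ← pow_add]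
    ring_nf
  rw [two_mul, prod_range_add, prod_congr rfl hlow, prod_congr rfl hhigh, prod_mul_distrib,
    prod_mul_distrib, prod_mul_distrib, prod_const, prod_const, prod_pow_eq_pow_sum,
    sum_range_five_mul_succ, prod_range_reflect (fun i => 1 - X ^ (5 * i + 1) : ℕ → ℚ⟦X⟧),
    prod_mul_distrib, card_range, ← pow_mul, pow_add]
  ring

theorem prod_eq_thetaSum_gaussBinom (N : ℕ) :
    ∏ i ∈ range N, ((1 - X ^ (5 * i + 1)) * (1 - X ^ (5 * i + 4))) =
      thetaSum N (fun j => gaussBinom 5 (2 * N) (N + j)) := by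
  have hcauchy := prod_add_mul_X_pow_eq_sum_gaussBinom 5 (2 * N) (X ^ (5 * N + 1)) (-X ^ 5)
  simp only [neg_mul, ← sub_eq_add_neg, prod_X_pow_sub_X_pow] at hcauchy
  refine mul_left_cancel₀ (by simp [X_ne_zero]) (hcauchy.trans ?_)
  rw [thetaSum, mul_sum]
  refine sum_congr rfl fun k hk => ?_
  have hexp := five_mul_choose_two_add_eq_thetaExp (N := N) (k := k) (by simp at hk; omega)
  have hsign : ((-1) ^ k : ℚ⟦X⟧) = (-1) ^ N * (-1) ^ (k + N) := by
    rw [← pow_add, show N + (k + N) = k + 2 * N by ring, pow_add, pow_mul]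
    simp
  rw [add_sub_cancel, neg_pow, ← pow_mul, ← pow_mul,
    show (X : ℚ⟦X⟧) ^ (5 * k.choose 2) * ((-1) ^ k * X ^ (5 * k)) * X ^ ((5 * N + 1) * (2 * N - k)) =
      (-1) ^ k * X ^ (5 * k.choose 2 + 5 * k + (5 * N + 1) * (2 * N - k)) by ring,
    hexp, hsign, pow_add]
  ring

end RogersRamanujan

namespace RogersRamanujan

noncomputable def schurSum (n : ℕ) : ℚ⟦X⟧ :=
  ∑ r ∈ range (n + 1), X ^ (r ^ 2 + r) * gaussBinom 1 (n - r) r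

theorem schurSum_add_two (n : ℕ) : schurSum (n + 2) = schurSum (n + 1) + X ^ (n + 2) * schurSum n := by
  let f (m r : ℕ) : ℚ⟦X⟧ := X ^ (r ^ 2 + r) * gaussBinom 1 (m - r) r
  have hpascal : ∀ r, f (n + 2) (r + 1) = f (n + 1) (r + 1) + X ^ (n + 2) * f n r := by
    intro r
    rcases Nat.lt_or_ge n r with hr | hr
    · simp only [f, show n - r = 0 by omega, show n + 1 - (r + 1) = 0 by omega,
        show n + 2 - (r + 1) = 0 by omega, gaussBinom_eq_zero_of_lt (show (0 : ℤ) < r by omega),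
        gaussBinom_eq_zero_of_lt (show (0 : ℤ) < (r + 1 : ℕ) by omega), mul_zero, add_zero]
    simp only [f, show n + 2 - (r + 1) = n - r + 1 by omega, show n + 1 - (r + 1) = n - r by omega,
      gaussBinom_succ_natCast_succ, mul_add, add_right_inj, one_mul, ← mul_assoc, ← pow_add]
    exact X_pow_mul_gaussBinom_congr fun _ h => by ring_nf; omega
  have hvanish : ∀ m, f m (m + 1) = 0 := fun m => by simp [f, gaussBinom_eq_zero_of_lt]
  change ∑ r ∈ range (n + 3), f (n + 2) r =
    ∑ r ∈ range (n + 2), f (n + 1) r + X ^ (n + 2) * ∑ r ∈ range (n + 1), f n r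
  rw [sum_range_succ', sum_congr rfl fun r _ => hpascal r, sum_add_distrib, ← mul_sum,
    sum_range_succ (f n), sum_range_succ (fun r => f (n + 1) (r + 1)), hvanish, hvanish,
    sum_range_succ' (f (n + 1))]
  simp only [f, add_zero, Nat.sub_zero, Nat.cast_zero, gaussBinom_zero_right]
  ring

noncomputable def schurBinom (n : ℕ) (j : ℤ) : ℚ⟦X⟧ := gaussBinom 1 (n + 1) ((n - 5 * j) / 2)

noncomputable def schurTheta (J n : ℕ) : ℚ⟦X⟧ := thetaSum J (schurBinom n)

/-- The correction terms that telescope away in the recurrence for `schurTheta`. -/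
noncomputable def schurRemainder (n : ℕ) (j : ℤ) : ℚ⟦X⟧ :=
  if Even ((n : ℤ) + j) then
    X ^ (thetaExp j + ((n + 2 - 5 * j) / 2).toNat) * gaussBinom 1 (n + 1) ((n + 2 - 5 * j) / 2)
  else 0

theorem X_pow_thetaExp_mul_schurBinom_add_two (n : ℕ) (j : ℤ) :
    X ^ thetaExp j * schurBinom (n + 2) j =
      X ^ thetaExp j * schurBinom (n + 1) j + X ^ (n + 2) * (X ^ thetaExp j * schurBinom n j) +
        (schurRemainder n j + schurRemainder n (j + 1)) := by
  have hnext : Even ((n : ℤ) + (j + 1)) ↔ ¬Even ((n : ℤ) + j) := by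
    rw [← add_assoc, Int.even_add_one]
  simp only [schurBinom, schurRemainder, hnext, show n + 2 + 1 = n + 1 + 2 from rfl]
  push_cast
  split_ifs with heven
  · obtain ⟨t, ht⟩ := heven
    rw [show ((n : ℤ) + 2 - 5 * j) / 2 = (n + 2 - 5 * j) / 2 from rfl,
      show ((n : ℤ) + 1 - 5 * j) / 2 = (n + 2 - 5 * j) / 2 - 1 by omega,
      show ((n : ℤ) - 5 * j) / 2 = (n + 2 - 5 * j) / 2 - 1 by omega, gaussBinom_add_two one_pos,
      pow_add]
    ring
  · have hodd : Odd ((n : ℤ) + j) := Int.not_even_iff_odd.1 heven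
    obtain ⟨t, ht⟩ := hodd
    set m := ((n : ℤ) + 2 - 5 * j) / 2 with hm
    rw [show ((n : ℤ) + 1 - 5 * j) / 2 = m by omega, show ((n : ℤ) - 5 * j) / 2 = m - 1 by omega,
      show ((n : ℤ) + 2 - 5 * (j + 1)) / 2 = m - 2 by omega, gaussBinom_add_two' one_pos]
    have hshift : X ^ thetaExp j * X ^ (1 * (((n + 1 : ℕ) : ℤ) + 2 - m).toNat) *
        gaussBinom 1 (n + 1) (m - 2) =
          X ^ (thetaExp (j + 1) + (m - 2).toNat) * gaussBinom 1 (n + 1) (m - 2) := by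
      have := thetaExp_succ j
      rw [← pow_add]
      exact X_pow_mul_gaussBinom_congr fun _ _ => by omega
    linear_combination hshift

theorem schurRemainder_neg_eq_zero {J n : ℕ} (hn : n + 2 ≤ 5 * J + 1) :
    schurRemainder n (-J) = 0 := by
  rw [schurRemainder]
  split_ifs with h
  · obtain ⟨t, ht⟩ := h
    rw [gaussBinom_eq_zero_of_lt (by omega), mul_zero]
  · rfl

theorem schurRemainder_succ_eq_zero {J n : ℕ} (hn : n + 2 ≤ 5 * J + 1) :
    schurRemainder n (J + 1) = 0 := by
  rw [schurRemainder]
  split_ifs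
  · rw [gaussBinom_eq_zero_of_neg (by omega), mul_zero]
  · rfl

theorem schurTheta_add_two {J n : ℕ} (hn : n + 2 ≤ 5 * J + 1) :
    schurTheta J (n + 2) = schurTheta J (n + 1) + X ^ (n + 2) * schurTheta J n := by
  let h (k : ℕ) : ℚ⟦X⟧ := (-1) ^ (k + J) * schurRemainder n (k - J)
  have hterm : ∀ k ∈ range (2 * J + 1),
      (-1) ^ (k + J) * X ^ thetaExp (k - J) * schurBinom (n + 2) (k - J) =
        (-1) ^ (k + J) * X ^ thetaExp (k - J) * schurBinom (n + 1) (k - J) +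
          X ^ (n + 2) * ((-1) ^ (k + J) * X ^ thetaExp (k - J) * schurBinom n (k - J)) +
            (h k - h (k + 1)) := by
    intro k _
    simp only [h, mul_assoc, X_pow_thetaExp_mul_schurBinom_add_two, Nat.cast_succ,
      show (k : ℤ) + 1 - J = k - J + 1 by ring, pow_succ, add_right_comm k 1 J]
    ring
  have hfirst : h 0 = 0 := by simp [h, schurRemainder_neg_eq_zero hn]
  have hlast : h (2 * J + 1) = 0 := by
    simp only [h]
    rw [show ((2 * J + 1 : ℕ) : ℤ) - J = J + 1 by push_cast; ring, schurRemainder_succ_eq_zero hn,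
      mul_zero]
  rw [schurTheta, thetaSum, sum_congr rfl hterm, sum_add_distrib, sum_add_distrib, sum_range_sub',
    hfirst, hlast, sub_zero, add_zero, ← mul_sum]
  rfl

theorem schurSum_of_le_one {n : ℕ} (hn : n ≤ 1) : schurSum n = 1 := by
  interval_cases n <;> simp [schurSum, sum_range_succ, gaussBinom_eq_zero_of_lt]

theorem schurTheta_of_le_one (J : ℕ) {n : ℕ} (hn : n ≤ 1) : schurTheta J n = 1 := by
  rw [schurTheta, thetaSum, sum_eq_single J]
  · simp [schurBinom, ← two_mul, pow_mul, show (n : ℤ) / 2 = 0 by omega]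
  · intro k _ hk
    rw [schurBinom]
    rcases Nat.lt_or_gt_of_ne hk with hk | hk
    · rw [gaussBinom_eq_zero_of_lt (by omega), mul_zero]
    · rw [gaussBinom_eq_zero_of_neg (by omega), mul_zero]
  · exact fun h => absurd (mem_range.2 (by omega)) h

theorem schurSum_eq_schurTheta {J n : ℕ} (hn : n ≤ 5 * J + 1) : schurSum n = schurTheta J n := by
  induction n using Nat.twoStepInduction with
  | zero => rw [schurSum_of_le_one zero_le_one, schurTheta_of_le_one J zero_le_one]
  | one => rw [schurSum_of_le_one le_rfl, schurTheta_of_le_one J le_rfl]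
  | more n ih₀ ih₁ =>
    rw [schurSum_add_two, schurTheta_add_two hn, ih₀ (by omega), ih₁ (by omega)]

end RogersRamanujan

namespace RogersRamanujan

local notation "𝓘" d:max => Ideal.span {(X : ℚ⟦X⟧) ^ (d + 1)}

theorem inv_one_sub_X_pow_smodEq_one {d e : ℕ} (he : d < e) :
    (1 - X ^ e : ℚ⟦X⟧)⁻¹ ≡ 1 [SMOD 𝓘 d] := by
  have hinv : (1 - X ^ e : ℚ⟦X⟧)⁻¹ * (1 - X ^ e) = 1 :=
    PowerSeries.inv_mul_cancel _ (by simp [(Nat.zero_le d).trans_lt he |>.ne'])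
  have h := (SModEq.refl (1 - X ^ e : ℚ⟦X⟧)⁻¹).mul (one_sub_X_pow_smodEq_one (R := ℚ) he).symm
  rwa [mul_one, hinv] at h

theorem qpochA_smodEq_qpochA {a d M : ℕ} (ha : 0 < a) (hdM : d ≤ M) :
    qpochA a d ≡ qpochA a M [SMOD 𝓘 d] :=
  prod_range_smodEq_of_smodEq_one _ hdM fun n hn _ => one_sub_X_pow_smodEq_one (by nlinarith)

theorem gaussBinom_mul_qpochA_smodEq_one {a d n k : ℕ} (ha : 0 < a) (hkn : k + d ≤ n) :
    gaussBinom a n k * qpochA a k ≡ 1 [SMOD 𝓘 d] := by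
  have hprod := gaussBinom_mul_qpochA_mul_qpochA (a := a) (show k ≤ n by omega)
  have hrest : qpochA a (n - k) ≡ qpochA a n [SMOD 𝓘 d] :=
    (qpochA_smodEq_qpochA ha (by omega)).symm.trans (qpochA_smodEq_qpochA ha (by omega))
  refine smodEq_of_isUnit_mul (isUnit_qpochA ha (n - k)) ?_
  calc qpochA a (n - k) * (gaussBinom a n k * qpochA a k) = qpochA a n := by rw [← hprod]; ring
    _ ≡ qpochA a (n - k) * 1 [SMOD 𝓘 d] := by rw [mul_one]; exact hrest.symm

theorem qpochA_mul_gaussBinom_smodEq_one {a d M n : ℕ} {k : ℤ} (ha : 0 < a) (hdM : d ≤ M)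
    (hdk : d ≤ k) (hkn : k + d ≤ n) :
    qpochA a M * gaussBinom a n k ≡ 1 [SMOD 𝓘 d] := by
  lift k to ℕ using by omega
  have hMk : qpochA a M ≡ qpochA a k [SMOD 𝓘 d] :=
    (qpochA_smodEq_qpochA ha hdM).symm.trans (qpochA_smodEq_qpochA ha (by omega))
  rw [mul_comm]
  exact ((SModEq.refl _).mul hMk).trans (gaussBinom_mul_qpochA_smodEq_one ha (by omega))

theorem mul_thetaSum_smodEq {d : ℕ} (J : ℕ) (u : ℚ⟦X⟧) (B : ℤ → ℚ⟦X⟧)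
    (hB : ∀ j : ℤ, j.natAbs ≤ d → u * B j ≡ 1 [SMOD 𝓘 d]) :
    u * thetaSum J B ≡ thetaSum J 1 [SMOD 𝓘 d] := by
  rw [thetaSum, thetaSum, mul_sum]
  refine SModEq.sum fun k _ => ?_
  rw [Pi.one_apply, mul_assoc, mul_assoc, mul_left_comm u, mul_left_comm u]
  exact (SModEq.refl _).mul (X_pow_mul_smodEq fun h => hB _ ((natAbs_le_thetaExp _).trans h))

noncomputable def invFactor (m : ℕ) : ℚ⟦X⟧ :=
  if m % 5 = 2 ∨ m % 5 = 3 then (1 - X ^ m)⁻¹ else 1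

theorem invFactor_of_not {m : ℕ} (hm : ¬(m % 5 = 2 ∨ m % 5 = 3)) : invFactor m = 1 := if_neg hm

theorem one_sub_X_pow_mul_invFactor {m : ℕ} (hm : m % 5 = 2 ∨ m % 5 = 3) :
    (1 - X ^ m) * invFactor m = 1 := by
  rw [invFactor, if_pos hm]
  exact PowerSeries.mul_inv_cancel _ (by simp [show m ≠ 0 by omega])

theorem invFactor_smodEq_one {d m : ℕ} (hm : d < m) : invFactor m ≡ 1 [SMOD 𝓘 d] := by
  rw [invFactor]
  split_ifs
  · exact inv_one_sub_X_pow_smodEq_one hm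
  · rfl

theorem prod_filter_inv_eq_prod_invFactor (d : ℕ) :
    ∏ n ∈ (range (d + 1)).filter (fun n => n % 5 = 2 ∨ n % 5 = 3), (1 - X ^ n : ℚ⟦X⟧)⁻¹ =
      ∏ i ∈ range d, invFactor (i + 1) := by
  rw [prod_filter, prod_range_succ']
  simp [invFactor]

theorem qpoch_mul_prod_invFactor (J : ℕ) :
    qpoch (5 * J) * ∏ i ∈ range (5 * J), invFactor (i + 1) =
      qpochA 5 J * ∏ i ∈ range J, ((1 - X ^ (5 * i + 1)) * (1 - X ^ (5 * i + 4))) := by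
  rw [qpoch, qpochA, ← prod_mul_distrib, qpochA, ← prod_mul_distrib]
  induction J with
  | zero => simp
  | succ J ih =>
    rw [show 5 * (J + 1) = 5 * J + 5 by ring, prod_range_add, ih, prod_range_succ _ J]
    simp only [prod_range_succ, prod_range_zero, one_mul, mul_one, mul_add, add_assoc,
      Nat.reduceAdd]
    congr 1
    rw [invFactor_of_not (m := 5 * J + 1) (by omega), invFactor_of_not (m := 5 * J + 4) (by omega),
      invFactor_of_not (m := 5 * J + 5) (by omega), mul_assoc _ (_ * _),
      one_sub_X_pow_mul_invFactor (m := 5 * J + 2) (by omega), mul_assoc _ (_ * _),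
      one_sub_X_pow_mul_invFactor (m := 5 * J + 3) (by omega)]
    ring

theorem qpoch_mul_prod_smodEq_thetaSum {d J : ℕ} (hJ : 2 * d ≤ J) :
    qpoch d * ∏ n ∈ (range (d + 1)).filter (fun n => n % 5 = 2 ∨ n % 5 = 3), (1 - X ^ n)⁻¹ ≡
      thetaSum J 1 [SMOD 𝓘 d] := by
  have hext : qpoch d * ∏ i ∈ range d, invFactor (i + 1) ≡
      qpoch (5 * J) * ∏ i ∈ range (5 * J), invFactor (i + 1) [SMOD 𝓘 d] :=
    (qpochA_smodEq_qpochA one_pos (by omega)).mul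
      (prod_range_smodEq_of_smodEq_one _ (by omega) fun i hi _ => invFactor_smodEq_one (by omega))
  rw [qpoch_mul_prod_invFactor, prod_eq_thetaSum_gaussBinom] at hext
  rw [prod_filter_inv_eq_prod_invFactor]
  exact hext.trans <| mul_thetaSum_smodEq J _ _ fun j hj =>
    qpochA_mul_gaussBinom_smodEq_one (by norm_num) (by omega) (by omega) (by omega)

theorem inv_qpoch_smodEq_gaussBinom {d n r : ℕ} (hrn : 2 * r + d ≤ n) :
    (qpoch r)⁻¹ ≡ gaussBinom 1 (n - r) r [SMOD 𝓘 d] := by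
  have hG := gaussBinom_mul_qpochA_smodEq_one (d := d) (k := r) (n := n - r) one_pos (by omega)
  have hinv : qpoch r * (qpoch r)⁻¹ = 1 :=
    PowerSeries.mul_inv_cancel _ (isUnit_iff_constantCoeff.1 (isUnit_qpochA one_pos r)).ne_zero
  calc (qpoch r)⁻¹ = 1 * (qpoch r)⁻¹ := (one_mul _).symm
    _ ≡ gaussBinom 1 (n - r) r * qpoch r * (qpoch r)⁻¹ [SMOD 𝓘 d] := hG.symm.mul rfl
    _ = gaussBinom 1 (n - r) r := by rw [mul_assoc, hinv, mul_one]

theorem sum_inv_qpoch_smodEq_schurSum {d n : ℕ} (hn : 3 * d ≤ n) :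
    ∑ r ∈ range (d + 1), X ^ (r ^ 2 + r) * (qpoch r)⁻¹ ≡ schurSum n [SMOD 𝓘 d] := by
  refine (SModEq.sum fun r hr => (SModEq.refl _).mul ?_).trans
    (sum_range_smodEq_of_smodEq_zero _ (by omega) fun r hr _ => ?_)
  · exact inv_qpoch_smodEq_gaussBinom (by simp at hr; omega)
  · simpa using X_pow_mul_smodEq (f := gaussBinom 1 (n - r) r) (g := 0)
      fun h => absurd h (by nlinarith)

theorem qpoch_mul_sum_smodEq_thetaSum {d J : ℕ} (hJ : 7 * d ≤ 5 * J + 1) :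
    qpoch d * ∑ r ∈ range (d + 1), X ^ (r ^ 2 + r) * (qpoch r)⁻¹ ≡
      thetaSum J 1 [SMOD 𝓘 d] := by
  have hsum := sum_inv_qpoch_smodEq_schurSum (d := d) (n := 5 * J + 1) (by omega)
  rw [schurSum_eq_schurTheta le_rfl] at hsum
  exact ((SModEq.refl _).mul hsum).trans <| mul_thetaSum_smodEq J _ _ fun j hj =>
    qpochA_mul_gaussBinom_smodEq_one one_pos le_rfl (by omega) (by omega)

theorem prod_inv_smodEq_sum_inv_qpoch (d : ℕ) :
    ∏ n ∈ (range (d + 1)).filter (fun n => n % 5 = 2 ∨ n % 5 = 3), (1 - X ^ n)⁻¹ ≡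
      ∑ r ∈ range (d + 1), X ^ (r ^ 2 + r) * (qpoch r)⁻¹ [SMOD 𝓘 d] :=
  smodEq_of_isUnit_mul (isUnit_qpochA one_pos d) <|
    (qpoch_mul_prod_smodEq_thetaSum (J := 2 * d) le_rfl).trans
      (qpoch_mul_sum_smodEq_thetaSum (by omega)).symm

end RogersRamanujan

/-- Second Rogers–Ramanujan identity, coefficientwise:
`∏_{n≥1, n≡±2 (mod 5)} (1-q^n)⁻¹ = ∑_{r≥0} q^{r²+r}/(q)_r`.
Factors with `n > d` and terms with `r > d` do not affect the coefficient of `q^d`. -/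
theorem rogersRamanujan_second (d : ℕ) :
    (PowerSeries.coeff (R := ℚ) d)
        (∏ n ∈ (Finset.range (d + 1)).filter (fun n => n % 5 = 2 ∨ n % 5 = 3),
          ((1 - (PowerSeries.X : PowerSeries ℚ) ^ n)⁻¹)) =
      (PowerSeries.coeff (R := ℚ) d)
        (∑ r ∈ Finset.range (d + 1),
          (PowerSeries.X : PowerSeries ℚ) ^ (r ^ 2 + r) * (qpoch r)⁻¹) :=
  RogersRamanujan.coeff_eq_of_smodEq (RogersRamanujan.prod_inv_smodEq_sum_inv_qpoch d) le_rfl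
end

section
/- The generating function for partitions of N with largest part at most n+1, at most n parts, and every successive rank equal to 1 is ∏_{j=1}^{n}(1+q^{2j}); equivalently, such partitions of N are in bijection with partitions of N into distinct even parts each at most 2n. -/
/-- Length of the `l`-th column (1-indexed) of the Ferrers diagram:
the number of parts that are `≥ l`. -/
def colLen {N : ℕ} (p : Nat.Partition N) (l : ℕ) : ℕ :=
  (p.parts.filter (fun x => l ≤ x)).card

/-- Length of the `l`-th row (1-indexed) of the Ferrers diagram, i.e. the `l`-th
largest part: the number of columns of length `≥ l`. -/
def rowLen {N : ℕ} (p : Nat.Partition N) (l : ℕ) : ℕ :=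
  ((Finset.range (N + 1)).filter (fun m => l ≤ colLen p (m + 1))).card

/-- The number of diagonal hooks (right angles) = size of the Durfee square. -/
def durfee {N : ℕ} (p : Nat.Partition N) : ℕ :=
  ((Finset.range (N + 1)).filter (fun l => l + 1 ≤ rowLen p (l + 1))).card

/-- The `l`-th successive rank (1-indexed): length of the `l`-th row minus length
of the `l`-th column. -/
def srank {N : ℕ} (p : Nat.Partition N) (l : ℕ) : ℤ :=
  (rowLen p l : ℤ) - (colLen p l : ℤ)

/-!
If every successive rank is 1, the `l`-th diagonal hook has leg `b_l` and arm `b_l + 1`, hence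
`2 (b_l + 1)` cells, and the legs are strictly decreasing. Columns to the right of the Durfee
square only count rows inside it, so such a partition is determined by its legs; conversely,
wrapping hooks with strictly decreasing legs `b_1 > b_2 > ⋯` around one another produces one.
The box condition amounts to `b_1 < n`. Hence the hook lengths give a bijection with partitions
into distinct even parts at most `2n`, whose generating function is `∏_{j=1}^n (1 + q^{2j})`.
-/

open Finset

lemma lt_card_filter_range_iff {B : ℕ} {q : ℕ → Prop} [DecidablePred q]
    (hq : ∀ ⦃a b⦄, b ≤ a → q a → q b) (hB : ∀ m, q m → m < B) (m : ℕ) :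
    m < #{k ∈ range B | q k} ↔ q m := by
  by_cases hm : q m
  · have hsub : range (m + 1) ⊆ {k ∈ range B | q k} := fun k hk => by
      rw [mem_range] at hk
      exact mem_filter.mpr ⟨mem_range.mpr ((hB m hm).trans_le' (by omega)), hq (by omega) hm⟩
    simpa [hm] using card_le_card hsub
  · have hsub : {k ∈ range B | q k} ⊆ range m := fun k hk => by
      rw [mem_filter] at hk
      exact mem_range.mpr (lt_of_not_ge fun hmk => hm (hq hmk hk.2))
    simpa [hm] using card_le_card hsub

lemma Multiset.count_succ_add_card_filter (s : Multiset ℕ) (x : ℕ) :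
    s.count (x + 1) + Multiset.card (s.filter (x + 1 + 1 ≤ ·)) =
      Multiset.card (s.filter (x + 1 ≤ ·)) := by
  induction s using Multiset.induction_on with
  | empty => simp
  | cons a s ih =>
    simp only [Multiset.count_cons, Multiset.filter_cons]
    split_ifs <;> simp only [Multiset.card_add, Multiset.card_singleton, Multiset.card_zero] <;> omega

section Conjugation

variable {N : ℕ} (p : Nat.Partition N)

lemma colLen_antitone : Antitone (colLen p) := fun _ _ h =>
  Multiset.card_le_card (Multiset.monotone_filter_right _ fun _ hx => h.trans hx)

lemma colLen_le_card (l : ℕ) : colLen p l ≤ Multiset.card p.parts :=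
  Multiset.card_le_card (Multiset.filter_le _ _)

lemma le_of_colLen_pos {l : ℕ} (h : 0 < colLen p l) : l ≤ N := by
  obtain ⟨x, hx⟩ := Multiset.card_pos_iff_exists_mem.mp h
  rw [Multiset.mem_filter] at hx
  exact hx.2.trans (Nat.Partition.le_of_mem_parts hx.1)

-- Both sides say that the cell in row `j + 1` and column `i + 1` lies in the diagram.
lemma lt_rowLen_iff (i j : ℕ) : i < rowLen p (j + 1) ↔ j < colLen p (i + 1) :=
  lt_card_filter_range_iff (fun _ _ hba h => h.trans (colLen_antitone p (by omega)))
    (fun m hm => by have := le_of_colLen_pos p (by omega : 0 < colLen p (m + 1)); omega) i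

lemma lt_durfee_iff (l : ℕ) : l < durfee p ↔ l < colLen p (l + 1) := by
  rw [← lt_rowLen_iff]
  refine lt_card_filter_range_iff (fun a b hba h => ?_) (fun m hm => ?_) l
  · rw [← Nat.lt_iff_add_one_le, lt_rowLen_iff] at h ⊢
    exact (h.trans_le' hba).trans_le (colLen_antitone p (by omega))
  · rw [← Nat.lt_iff_add_one_le, lt_rowLen_iff] at hm
    have := le_of_colLen_pos p (by omega : 0 < colLen p (m + 1))
    omega

lemma durfee_le_card : durfee p ≤ Multiset.card p.parts := by
  by_contra! h
  have := (lt_durfee_iff p _).mp h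
  have := colLen_le_card p (Multiset.card p.parts + 1)
  omega

lemma colLen_succ_of_durfee_le {j : ℕ} (hj : durfee p ≤ j) :
    colLen p (j + 1) = #{m ∈ range (durfee p) | j < rowLen p (m + 1)} := by
  have hcol : colLen p (j + 1) ≤ durfee p := by
    have := (lt_durfee_iff p (durfee p)).not.mp (lt_irrefl _)
    have := colLen_antitone p (by omega : durfee p + 1 ≤ j + 1)
    omega
  refine eq_of_forall_lt_iff fun m => ?_
  rw [lt_card_filter_range_iff (fun a b hba h => by rw [lt_rowLen_iff] at h ⊢; omega)
    (fun m h => by rw [lt_rowLen_iff] at h; omega), lt_rowLen_iff]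

lemma parts_eq_of_colLen_eq {M : ℕ} (q : Nat.Partition M)
    (h : ∀ l, colLen p (l + 1) = colLen q (l + 1)) : p.parts = q.parts := by
  ext y
  rcases y with _ | x
  · rw [Multiset.count_eq_zero_of_notMem fun h => (p.parts_pos h).false,
      Multiset.count_eq_zero_of_notMem fun h => (q.parts_pos h).false]
  · have hp : p.parts.count (x + 1) + colLen p (x + 1 + 1) = colLen p (x + 1) :=
      p.parts.count_succ_add_card_filter x
    have hq : q.parts.count (x + 1) + colLen q (x + 1 + 1) = colLen q (x + 1) :=
      q.parts.count_succ_add_card_filter x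
    have := h x
    have := h (x + 1)
    omega

end Conjugation

section SuccRanksOne

variable {N M : ℕ}

def SuccRanksOne (p : Nat.Partition N) : Prop :=
  ∀ l, 1 ≤ l → l ≤ durfee p → srank p l = 1

lemma SuccRanksOne.rowLen_eq {p : Nat.Partition N} (hp : SuccRanksOne p) {l : ℕ}
    (hl : l < durfee p) : rowLen p (l + 1) = colLen p (l + 1) + 1 := by
  have := hp (l + 1) (by omega) hl
  rw [srank] at this
  omega

-- The leg lengths `ν_l - l` of the diagonal hooks, outermost first.
def legs (p : Nat.Partition N) : List ℕ :=
  (List.range (durfee p)).map fun l => colLen p (l + 1) - (l + 1)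

lemma length_legs (p : Nat.Partition N) : (legs p).length = durfee p := by
  simp [legs]

lemma colLen_eq_getElem_legs (p : Nat.Partition N) {l : ℕ} (hl : l < (legs p).length) :
    colLen p (l + 1) = (legs p)[l] + (l + 1) := by
  rw [length_legs] at hl
  have := (lt_durfee_iff p l).mp hl
  simp only [legs, List.getElem_map, List.getElem_range]
  omega

lemma pairwise_legs (p : Nat.Partition N) : (legs p).Pairwise (· > ·) := by
  refine List.pairwise_map.mpr ((List.pairwise_lt_range).imp_of_mem fun {a b} _ hb hab => ?_)
  have := (lt_durfee_iff p b).mp (List.mem_range.mp hb)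
  have := colLen_antitone p (by omega : a + 1 ≤ b + 1)
  omega

lemma legs_lt_card (p : Nat.Partition N) : ∀ b ∈ legs p, b < Multiset.card p.parts := by
  simp only [legs, List.mem_map, List.mem_range]
  rintro _ ⟨l, hl, rfl⟩
  have := colLen_antitone p (by omega : 1 ≤ l + 1)
  have := colLen_le_card p 1
  have := (lt_durfee_iff p l).mp hl
  omega

lemma SuccRanksOne.parts_eq {p : Nat.Partition N} {q : Nat.Partition M}
    (hp : SuccRanksOne p) (hq : SuccRanksOne q) (h : legs p = legs q) : p.parts = q.parts := by
  have hd : durfee p = durfee q := by rw [← length_legs, h, length_legs]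
  have hcol : ∀ l < durfee p, colLen p (l + 1) = colLen q (l + 1) := fun l hl => by
    rw [colLen_eq_getElem_legs p (by rwa [length_legs]),
      colLen_eq_getElem_legs q (by rwa [length_legs, ← hd]), List.getElem_of_eq h]
  refine parts_eq_of_colLen_eq p q fun j => ?_
  by_cases hj : j < durfee p
  · exact hcol j hj
  rw [colLen_succ_of_durfee_le p (not_lt.mp hj), colLen_succ_of_durfee_le q (hd ▸ not_lt.mp hj),
    ← hd]
  refine congrArg card (filter_congr fun m hm => ?_)
  rw [mem_range] at hm
  rw [hp.rowLen_eq hm, hq.rowLen_eq (hd ▸ hm), hcol m hm]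

end SuccRanksOne

/- Wraps an outer diagonal hook with leg `a` and arm `a + 1` around the diagram with rows `s`,
which should have at most `a` rows, each of length at most `a + 1`: a new first row of length
`a + 2`, every old row one cell longer, and rows of length `1` below them down to row `a + 1`. -/
def addHook (a : ℕ) (s : Multiset ℕ) : Multiset ℕ :=
  (a + 2) ::ₘ (s.map (· + 1) + Multiset.replicate (a - Multiset.card s) 1)

lemma card_addHook {a : ℕ} {s : Multiset ℕ} (hs : Multiset.card s ≤ a) :
    Multiset.card (addHook a s) = a + 1 := by
  simp only [addHook, Multiset.card_cons, Multiset.card_add, Multiset.card_map,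
    Multiset.card_replicate]
  omega

lemma sum_addHook {a : ℕ} {s : Multiset ℕ} (hs : Multiset.card s ≤ a) :
    (addHook a s).sum = s.sum + 2 * (a + 1) := by
  simp only [addHook, Multiset.sum_cons, Multiset.sum_add, Multiset.sum_map_add, Multiset.map_id',
    Multiset.map_const', Multiset.sum_replicate, smul_eq_mul, mul_one]
  omega

lemma le_of_mem_addHook {a x : ℕ} {s : Multiset ℕ} (hs : ∀ y ∈ s, y ≤ a + 1)
    (hx : x ∈ addHook a s) : x ≤ a + 2 := by
  simp only [addHook, Multiset.mem_cons, Multiset.mem_add, Multiset.mem_map,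
    Multiset.mem_replicate] at hx
  rcases hx with rfl | ⟨y, hy, rfl⟩ | ⟨-, rfl⟩
  · rfl
  · exact Nat.add_le_add_right (hs y hy) 1
  · omega

section AddHook

variable {N M a : ℕ} {p : Nat.Partition N} {p' : Nat.Partition M}

lemma colLen_eq_zero_of_forall_le {b l : ℕ} (hb : ∀ x ∈ p.parts, x ≤ b) (hl : b < l) :
    colLen p l = 0 := by
  rw [colLen, Multiset.card_eq_zero, Multiset.filter_eq_nil]
  intro x hx hlx
  have := hb x hx
  omega

lemma colLen_one_of_addHook (hcard : Multiset.card p.parts ≤ a)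
    (h : p'.parts = addHook a p.parts) : colLen p' 1 = a + 1 := by
  rw [colLen, Multiset.filter_eq_self.mpr fun x hx => Nat.succ_le_of_lt (p'.parts_pos hx), h,
    card_addHook hcard]

lemma colLen_add_two_of_addHook (h : p'.parts = addHook a p.parts) (j : ℕ) :
    colLen p' (j + 2) = colLen p (j + 1) + if j ≤ a then 1 else 0 := by
  have hrep : (Multiset.replicate (a - Multiset.card p.parts) 1).filter (j + 2 ≤ ·) = 0 :=
    Multiset.filter_eq_nil.mpr fun x hx => by rw [Multiset.eq_of_mem_replicate hx]; omega
  simp only [colLen, h, addHook, Multiset.filter_cons, Multiset.filter_add, hrep]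
  split_ifs <;> first | omega | simp [Multiset.filter_map]

lemma rowLen_one_of_addHook (hcard : Multiset.card p.parts ≤ a)
    (hle : ∀ x ∈ p.parts, x ≤ a + 1) (h : p'.parts = addHook a p.parts) :
    rowLen p' 1 = a + 2 := by
  refine eq_of_forall_lt_iff fun i => ?_
  rw [lt_rowLen_iff]
  rcases i with _ | i
  · rw [colLen_one_of_addHook hcard h]
    omega
  · rw [colLen_add_two_of_addHook h]
    split_ifs with hi
    · omega
    · rw [colLen_eq_zero_of_forall_le hle (by omega)]
      omega

lemma rowLen_add_two_of_addHook (hcard : Multiset.card p.parts ≤ a)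
    (hle : ∀ x ∈ p.parts, x ≤ a + 1) (h : p'.parts = addHook a p.parts) {j : ℕ} (hj : j < a) :
    rowLen p' (j + 2) = rowLen p (j + 1) + 1 := by
  refine eq_of_forall_lt_iff fun i => ?_
  rw [lt_rowLen_iff]
  rcases i with _ | i
  · rw [colLen_one_of_addHook hcard h]
    omega
  · rw [colLen_add_two_of_addHook h, Nat.add_lt_add_iff_right, lt_rowLen_iff]
    split_ifs with hi
    · omega
    · rw [colLen_eq_zero_of_forall_le hle (by omega)]
      omega

lemma durfee_of_addHook (hcard : Multiset.card p.parts ≤ a)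
    (h : p'.parts = addHook a p.parts) : durfee p' = durfee p + 1 := by
  refine eq_of_forall_lt_iff fun l => ?_
  rw [lt_durfee_iff]
  rcases l with _ | l
  · rw [colLen_one_of_addHook hcard h]
    omega
  · rw [colLen_add_two_of_addHook h, Nat.add_lt_add_iff_right, lt_durfee_iff]
    have := colLen_le_card p (l + 1)
    split_ifs <;> omega

lemma legs_of_addHook (hcard : Multiset.card p.parts ≤ a)
    (h : p'.parts = addHook a p.parts) : legs p' = a :: legs p := by
  rw [legs, durfee_of_addHook hcard h, List.range_succ_eq_map, List.map_cons, List.map_map,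
    colLen_one_of_addHook hcard h, legs]
  congr 1
  refine List.map_congr_left fun l hl => ?_
  have := (List.mem_range.mp hl).trans_le ((durfee_le_card p).trans hcard)
  simp only [Function.comp_apply, colLen_add_two_of_addHook h, if_pos this.le]
  omega

lemma SuccRanksOne.addHook (hp : SuccRanksOne p) (hcard : Multiset.card p.parts ≤ a)
    (hle : ∀ x ∈ p.parts, x ≤ a + 1) (h : p'.parts = addHook a p.parts) : SuccRanksOne p' := by
  intro l hl1 hl2
  rw [durfee_of_addHook hcard h] at hl2
  obtain rfl | ⟨l, rfl⟩ : l = 1 ∨ ∃ l', l = l' + 2 := by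
    rcases l with _ | _ | l <;> simp_all
  · rw [srank, rowLen_one_of_addHook hcard hle h, colLen_one_of_addHook hcard h]
    push_cast
    ring
  · have hla : l < a := by have := durfee_le_card p; omega
    rw [srank, rowLen_add_two_of_addHook hcard hle h hla, colLen_add_two_of_addHook h,
      if_pos hla.le, ← hp (l + 1) (by omega) (by omega), srank]
    push_cast
    ring

end AddHook

def hookParts : List ℕ → Multiset ℕ
  | [] => 0
  | a :: L => addHook a (hookParts L)

lemma pos_of_mem_hookParts : ∀ {L : List ℕ} {x : ℕ}, x ∈ hookParts L → 0 < x
  | [], _, h => absurd h (Multiset.notMem_zero _)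
  | a :: L, x, h => by
    simp only [hookParts, addHook, Multiset.mem_cons, Multiset.mem_add, Multiset.mem_map,
      Multiset.mem_replicate] at h
    omega

lemma card_hookParts_le_and_forall_le {L : List ℕ} (hL : L.Pairwise (· > ·)) {a : ℕ} (ha : ∀ b ∈ L, b < a) :
    Multiset.card (hookParts L) ≤ a ∧ ∀ x ∈ hookParts L, x ≤ a + 1 := by
  induction L generalizing a with
  | nil => simp [hookParts]
  | cons b L ih =>
    obtain ⟨hbL, hL⟩ := List.pairwise_cons.mp hL
    obtain ⟨hcard, hle⟩ := ih hL hbL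
    have hb := ha b List.mem_cons_self
    exact ⟨(card_addHook hcard).trans_le hb,
      fun x hx => (le_of_mem_addHook hle hx).trans (by omega)⟩

lemma sum_hookParts {L : List ℕ} (hL : L.Pairwise (· > ·)) :
    (hookParts L).sum = (L.map fun b => 2 * (b + 1)).sum := by
  induction L with
  | nil => rfl
  | cons a L ih =>
    obtain ⟨haL, hL⟩ := List.pairwise_cons.mp hL
    rw [hookParts, sum_addHook (card_hookParts_le_and_forall_le hL haL).1, ih hL, List.map_cons, List.sum_cons,
      add_comm]

lemma succRanksOne_and_legs_eq_of_parts_eq {L : List ℕ} (hL : L.Pairwise (· > ·)) :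
    ∀ {N : ℕ} (p : Nat.Partition N), p.parts = hookParts L → SuccRanksOne p ∧ legs p = L := by
  induction L with
  | nil =>
    intro N p h
    have hd : durfee p = 0 := by simpa [h, hookParts] using durfee_le_card p
    exact ⟨fun l hl1 hl2 => by omega, by simp [legs, hd]⟩
  | cons a L ih =>
    intro N p h
    obtain ⟨haL, hL⟩ := List.pairwise_cons.mp hL
    obtain ⟨hcard, hle⟩ := card_hookParts_le_and_forall_le hL haL
    let q : Nat.Partition (hookParts L).sum := ⟨hookParts L, pos_of_mem_hookParts, rfl⟩
    obtain ⟨hq, hlegs⟩ := ih hL q rfl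
    exact ⟨hq.addHook hcard hle h, (legs_of_addHook hcard h).trans (congrArg _ hlegs)⟩

lemma SuccRanksOne.parts_eq_hookParts {N : ℕ} {p : Nat.Partition N} (hp : SuccRanksOne p) :
    p.parts = hookParts (legs p) := by
  obtain ⟨hq, hlegs⟩ := succRanksOne_and_legs_eq_of_parts_eq (pairwise_legs p)
    (⟨hookParts (legs p), pos_of_mem_hookParts, rfl⟩ : Nat.Partition _) rfl
  exact hp.parts_eq hq hlegs.symm

section HookPartition

variable {N : ℕ} {p : Nat.Partition N}

def SuccRanksOne.hookPartition (hp : SuccRanksOne p) : Nat.Partition N where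
  parts := ((legs p).map fun b => 2 * (b + 1) : List ℕ)
  parts_pos := by simp
  parts_sum := by
    rw [Multiset.sum_coe, ← sum_hookParts (pairwise_legs p), ← hp.parts_eq_hookParts, p.parts_sum]

lemma pairwise_map_legs (p : Nat.Partition N) :
    ((legs p).map fun b => 2 * (b + 1)).Pairwise (· > ·) :=
  List.pairwise_map.mpr ((pairwise_legs p).imp fun h => by omega)

lemma SuccRanksOne.nodup_hookPartition (hp : SuccRanksOne p) : hp.hookPartition.parts.Nodup :=
  Multiset.coe_nodup.mpr ((pairwise_map_legs p).imp ne_of_gt)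

lemma SuccRanksOne.even_le_of_mem_hookPartition (hp : SuccRanksOne p) {n : ℕ}
    (hcard : Multiset.card p.parts ≤ n) : ∀ x ∈ hp.hookPartition.parts, Even x ∧ x ≤ 2 * n := by
  intro x hx
  obtain ⟨b, hb, rfl⟩ := List.mem_map.mp (Multiset.mem_coe.mp hx)
  have := legs_lt_card p b hb
  exact ⟨⟨b + 1, by ring⟩, by omega⟩

lemma SuccRanksOne.eq_of_hookPartition_eq {q : Nat.Partition N} (hp : SuccRanksOne p)
    (hq : SuccRanksOne q) (h : hp.hookPartition = hq.hookPartition) : p = q := by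
  have hperm := Multiset.coe_eq_coe.mp (congrArg Nat.Partition.parts h)
  have hlegs : legs p = legs q :=
    List.map_injective_iff.mpr (fun a b (hab : 2 * (a + 1) = 2 * (b + 1)) => by omega)
      (hperm.eq_of_pairwise' (pairwise_map_legs p) (pairwise_map_legs q))
  exact Nat.Partition.ext (hp.parts_eq hq hlegs)

end HookPartition

lemma exists_hookPartition_eq {n N : ℕ} (q : Nat.Partition N) (hnd : q.parts.Nodup)
    (hev : ∀ x ∈ q.parts, Even x ∧ x ≤ 2 * n) :
    ∃ (p : Nat.Partition N) (hp : SuccRanksOne p),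
      (∀ x ∈ p.parts, x ≤ n + 1) ∧ Multiset.card p.parts ≤ n ∧ hp.hookPartition = q := by
  have hhalf : ∀ x ∈ q.parts, 2 * (x / 2 - 1 + 1) = x := fun x hx => by
    obtain ⟨⟨k, rfl⟩, -⟩ := hev x hx
    have := q.parts_pos hx
    omega
  set L := (q.parts.map fun x => x / 2 - 1).sort (· ≥ ·)
  have hcoe : ((L.map fun b => 2 * (b + 1) : List ℕ) : Multiset ℕ) = q.parts := by
    rw [← Multiset.map_coe, Multiset.sort_eq, Multiset.map_map]
    exact (Multiset.map_congr rfl hhalf).trans (Multiset.map_id' _)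
  have hLnd : L.Nodup := by
    rw [← Multiset.coe_nodup, Multiset.sort_eq]
    exact hnd.map_on fun x hx y hy hxy => by rw [← hhalf x hx, ← hhalf y hy, hxy]
  have hL : L.Pairwise (· > ·) :=
    ((Multiset.pairwise_sort _ _).and hLnd).imp fun h => lt_of_le_of_ne h.1 (Ne.symm h.2)
  have hsum : (hookParts L).sum = N := by
    rw [sum_hookParts hL, ← Multiset.sum_coe, hcoe, q.parts_sum]
  let p : Nat.Partition N := ⟨hookParts L, pos_of_mem_hookParts, hsum⟩
  obtain ⟨hp, hlegs⟩ := succRanksOne_and_legs_eq_of_parts_eq hL p rfl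
  have hbox : ∀ b ∈ L, b < n := fun b hb => by
    obtain ⟨x, hx, rfl⟩ := Multiset.mem_map.mp ((Multiset.mem_sort _).mp hb)
    have := hhalf x hx
    have := (hev x hx).2
    omega
  obtain ⟨hcard, hle⟩ := card_hookParts_le_and_forall_le hL hbox
  refine ⟨p, hp, hle, hcard, Nat.Partition.ext ?_⟩
  change (((legs p).map fun b => 2 * (b + 1) : List ℕ) : Multiset ℕ) = q.parts
  rw [hlegs, hcoe]

theorem card_succRanksOne_eq_card_distinct_even (n N : ℕ) :
    Nat.card {p : Nat.Partition N //
      (∀ x ∈ p.parts, x ≤ n + 1) ∧ Multiset.card p.parts ≤ n ∧ SuccRanksOne p} =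
    Nat.card {q : Nat.Partition N // q.parts.Nodup ∧ ∀ x ∈ q.parts, Even x ∧ x ≤ 2 * n} := by
  refine Nat.card_eq_of_bijective (fun p => ⟨p.2.2.2.hookPartition,
    p.2.2.2.nodup_hookPartition, p.2.2.2.even_le_of_mem_hookPartition p.2.2.1⟩) ⟨?_, ?_⟩
  · intro ⟨p, _, _, hp⟩ ⟨q, _, _, hq⟩ h
    exact Subtype.ext (hp.eq_of_hookPartition_eq hq (congrArg Subtype.val h))
  · rintro ⟨q, hnd, hev⟩
    obtain ⟨p, hp, hle, hcard, rfl⟩ := exists_hookPartition_eq q hnd hev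
    exact ⟨⟨p, hle, hcard, hp⟩, rfl⟩

section GenFun

open PowerSeries
open scoped PowerSeries.WithPiTopology

lemma hasProd_one_add_X_pow_even_le (n : ℕ) :
    HasProd (fun i => if Even (i + 1) ∧ i + 1 ≤ 2 * n then 1 + X ^ (i + 1) else (1 : ℚ⟦X⟧))
      (∏ j ∈ range n, (1 + X ^ (2 * (j + 1)))) := by
  have hne : ∀ i ∉ (range n).image (fun j => 2 * j + 1),
      (if Even (i + 1) ∧ i + 1 ≤ 2 * n then 1 + X ^ (i + 1) else 1 : ℚ⟦X⟧) = 1 := by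
    intro i hi
    rw [if_neg]
    rintro ⟨⟨k, hk⟩, hle⟩
    exact hi (mem_image.mpr ⟨k - 1, mem_range.mpr (by omega), by omega⟩)
  have := hasProd_prod_of_ne_finset_one (L := SummationFilter.unconditional ℕ) hne
  rw [prod_image fun a _ b _ (h : 2 * a + 1 = 2 * b + 1) => by omega] at this
  convert this using 1
  refine prod_congr rfl fun j hj => ?_
  rw [if_pos ⟨⟨j + 1, by ring⟩, by simp at hj; omega⟩]
  ring_nf

theorem powerSeriesMk_card_distinct_even_le (n : ℕ) :
    PowerSeries.mk (fun N => (Nat.card {p : Nat.Partition N //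
        p.parts.Nodup ∧ ∀ x ∈ p.parts, Even x ∧ x ≤ 2 * n} : ℚ)) =
      ∏ j ∈ range n, (1 + (X : ℚ⟦X⟧) ^ (2 * (j + 1))) := by
  set f : ℕ → ℕ → ℚ := fun i c => if c = 1 ∧ Even i ∧ i ≤ 2 * n then 1 else 0
  have hgen : Nat.Partition.genFun f = PowerSeries.mk (fun N => (Nat.card {p : Nat.Partition N //
        p.parts.Nodup ∧ ∀ x ∈ p.parts, Even x ∧ x ≤ 2 * n} : ℚ)) := by
    ext N
    simp_rw [Nat.Partition.coeff_genFun, coeff_mk, Nat.card_eq_fintype_card,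
      Fintype.card_subtype, Finsupp.prod, f, prod_boole, Multiset.toFinsupp_support,
      Multiset.toFinsupp_apply, Multiset.mem_toFinset, sum_boole, Multiset.nodup_iff_count_eq_one,
      ← forall_and]
  have hfac : ∀ i, (1 : ℚ⟦X⟧) + ∑' j, f (i + 1) (j + 1) • X ^ ((i + 1) * (j + 1)) =
      if Even (i + 1) ∧ i + 1 ≤ 2 * n then 1 + X ^ (i + 1) else 1 := by
    intro i
    rw [tsum_eq_single 0]
    · split_ifs <;> simp_all [f]
    · intro j hj
      simp [f, hj]
  have hprod := Nat.Partition.hasProd_genFun f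
  simp_rw [hfac, hgen] at hprod
  exact hprod.unique (hasProd_one_add_X_pow_even_le n)

end GenFun

/-- Partitions of `N` with largest part at most `n+1`, at most `n` parts, and every
successive rank equal to `1` have generating function `∏_{j=1}^n (1 + q^{2j})`;
equivalently they are equinumerous with partitions of `N` into distinct even parts
each at most `2n`. -/
theorem rankOne_box (n : ℕ) :
    PowerSeries.mk (fun N =>
        (Nat.card {p : Nat.Partition N //
          (∀ x ∈ p.parts, x ≤ n + 1) ∧ Multiset.card p.parts ≤ n ∧
          ∀ l, 1 ≤ l → l ≤ durfee p → srank p l = 1} : ℚ)) =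
      (∏ j ∈ Finset.range n, (1 + (PowerSeries.X : PowerSeries ℚ) ^ (2 * (j + 1)))) ∧
    ∀ N : ℕ,
      Nat.card {p : Nat.Partition N //
        (∀ x ∈ p.parts, x ≤ n + 1) ∧ Multiset.card p.parts ≤ n ∧
        ∀ l, 1 ≤ l → l ≤ durfee p → srank p l = 1} =
      Nat.card {p : Nat.Partition N //
        p.parts.Nodup ∧ ∀ x ∈ p.parts, Even x ∧ x ≤ 2 * n} := by
  have hcard : ∀ N : ℕ, Nat.card {p : Nat.Partition N //
      (∀ x ∈ p.parts, x ≤ n + 1) ∧ Multiset.card p.parts ≤ n ∧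
      ∀ l, 1 ≤ l → l ≤ durfee p → srank p l = 1} =
    Nat.card {p : Nat.Partition N // p.parts.Nodup ∧ ∀ x ∈ p.parts, Even x ∧ x ≤ 2 * n} :=
    card_succRanksOne_eq_card_distinct_even n
  refine ⟨?_, hcard⟩
  simp_rw [hcard]
  exact powerSeriesMk_card_distinct_even_le n
end
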